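/- arXiv:1908.05954 — 11 statements merged into one kernel-verified Lean document; each statement's English description precedes it below -/
import Mathlib

section
/- If a sequence w over a finite alphabet satisfies p_w(n) ≤ n for some single n ∈ ℕ (where p_w is the subword complexity function), then w is ultimately periodic. -/
/-- The subword complexity function: the number of distinct factors of length `n`. -/
noncomputable def complexityFn {A : Type*} (w : ℕ → A) (n : ℕ) : ℕ :=
  Set.ncard {v : Fin n → A | ∃ k : ℕ, ∀ i : Fin n, v i = w (k + i)}

/-- A sequence is ultimately periodic if it is periodic with some period `k > 0`
from some index `N` on. -/
def UltimatelyPeriodic {A : Type*} (w : ℕ → A) : Prop :=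
  ∃ k > 0, ∃ N : ℕ, ∀ n ≥ N, w (n + k) = w n

/-- The factor of `w` of length `m` starting at position `k`. -/
def facMH {A : Type*} (w : ℕ → A) (m : ℕ) (k : ℕ) : Fin m → A :=
  fun i => w (k + i)

lemma complexityFn_eq_ncard_range {A : Type*} (w : ℕ → A) (m : ℕ) :
    complexityFn w m = Set.ncard (Set.range (facMH w m)) := by
  unfold complexityFn
  congr 1
  ext v
  simp only [Set.mem_setOf_eq, Set.mem_range, facMH]
  constructor
  · rintro ⟨k, hk⟩; exact ⟨k, by funext i; exact (hk i).symm⟩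
  · rintro ⟨k, rfl⟩; exact ⟨k, fun i => rfl⟩

/-- Determinism property: length-`m` factors determine the next letter. -/
def DetMH {A : Type*} (w : ℕ → A) (m : ℕ) : Prop :=
  ∀ k k' : ℕ, facMH w m k = facMH w m k' → w (k + m) = w (k' + m)

lemma prefix_facMH {A : Type*} (w : ℕ → A) (m k : ℕ) :
    (facMH w (m + 1) k) ∘ Fin.castSucc = facMH w m k := by
  funext i
  simp [facMH]

lemma growth {A : Type*} [Fintype A] (w : ℕ → A) (m : ℕ) (hd : ¬ DetMH w m) :
    Set.ncard (Set.range (facMH w m)) + 1 ≤ Set.ncard (Set.range (facMH w (m + 1))) := by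
  unfold DetMH at hd
  push_neg at hd
  obtain ⟨k, k', heq, hne⟩ := hd
  set π : (Fin (m + 1) → A) → (Fin m → A) := fun v => v ∘ Fin.castSucc with hπ
  have himg : π '' Set.range (facMH w (m + 1)) = Set.range (facMH w m) := by
    ext v
    simp only [Set.mem_image, Set.mem_range]
    constructor
    · rintro ⟨_, ⟨j, rfl⟩, rfl⟩; exact ⟨j, prefix_facMH w m j⟩
    · rintro ⟨j, rfl⟩; exact ⟨facMH w (m + 1) j, ⟨j, rfl⟩, prefix_facMH w m j⟩
  by_contra hlt
  push_neg at hlt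
  have hfin : (Set.range (facMH w (m + 1))).Finite := Set.toFinite _
  have hle : (π '' Set.range (facMH w (m + 1))).ncard ≤
      (Set.range (facMH w (m + 1))).ncard := Set.ncard_image_le hfin
  have heqcard : (π '' Set.range (facMH w (m + 1))).ncard =
      (Set.range (facMH w (m + 1))).ncard := by
    rw [himg] at hle ⊢
    omega
  have hinj := Set.injOn_of_ncard_image_eq heqcard hfin
  have h1 : π (facMH w (m + 1) k) = π (facMH w (m + 1) k') := by
    rw [hπ]; simp only
    rw [prefix_facMH, prefix_facMH, heq]
  have := hinj (Set.mem_range_self k) (Set.mem_range_self k') h1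
  apply hne
  have := congrFun this (Fin.last m)
  simpa [facMH] using this

lemma exists_det {A : Type*} [Fintype A] (w : ℕ → A) (n : ℕ)
    (h : complexityFn w n ≤ n) : ∃ m, DetMH w m := by
  by_contra hall
  push_neg at hall
  have key : ∀ m, m + 1 ≤ Set.ncard (Set.range (facMH w m)) := by
    intro m
    induction m with
    | zero =>
      have : (Set.range (facMH w 0)).Nonempty := ⟨facMH w 0 0, Set.mem_range_self _⟩
      have := Set.Nonempty.ncard_pos (hs := Set.toFinite _) this
      omega
    | succ m ih =>
      have := growth w m (hall m)
      omega
  have := key n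
  rw [complexityFn_eq_ncard_range] at h
  omega

lemma step_facMH {A : Type*} (w : ℕ → A) (m : ℕ) (hd : DetMH w m) (k k' : ℕ)
    (h : facMH w m k = facMH w m k') : facMH w m (k + 1) = facMH w m (k' + 1) := by
  funext i
  rcases lt_or_eq_of_le (Nat.succ_le_of_lt i.isLt) with hi | hi
  · -- i.val + 1 < m
    have h1 := congrFun h ⟨i.val + 1, hi⟩
    simpa [facMH, Nat.add_assoc, Nat.add_comm 1 i.val] using h1
  · -- i.val + 1 = m
    have h1 := hd k k' h
    simp only [facMH]
    have e : ∀ t : ℕ, t + 1 + i.val = t + m := by intro t; omega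
    rw [e, e]
    exact h1

/-- If a sequence over a finite alphabet satisfies `p_w(n) ≤ n` for a single `n`,
then it is ultimately periodic. -/
theorem stmt0 {A : Type*} [Fintype A] (w : ℕ → A) (n : ℕ)
    (h : complexityFn w n ≤ n) : UltimatelyPeriodic w := by
  obtain ⟨m, hd⟩ := exists_det w n h
  obtain ⟨k, k', hne, heq⟩ := Finite.exists_ne_map_eq_of_infinite (facMH w m)
  wlog hlt : k < k' generalizing k k'
  · exact this k' k (Ne.symm hne) heq.symm (by omega)
  have hiter : ∀ j, facMH w m (k + j) = facMH w m (k' + j) := by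
    intro j
    induction j with
    | zero => simpa using heq
    | succ j ih =>
      have := step_facMH w m hd _ _ ih
      simpa [Nat.add_assoc] using this
  refine ⟨k' - k, by omega, k + m, fun t ht => ?_⟩
  have hw : ∀ j, w (k + j + m) = w (k' + j + m) := fun j => hd _ _ (hiter j)
  have := hw (t - k - m)
  have e1 : k + (t - k - m) + m = t := by omega
  have e2 : k' + (t - k - m) + m = t + (k' - k) := by omega
  rw [e1, e2] at this
  exact this.symm
end

section
/- If a sequence w ∈ {1,2}^ℕ is not balanced, then for each letter a ∈ {1,2} the sequence σ₁(aw) is not balanced, where σ₁ is the Sturmian substitution defined by σ₁(1) = 1, σ₁(2) = 21. -/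
/-- The word `v` occurs in the sequence `w` at position `k`. -/
def occursAt (w : ℕ → Fin 2) (v : List (Fin 2)) (k : ℕ) : Prop :=
  ∀ i < v.length, v.getD i 0 = w (k + i)

/-- Balance of a sequence over two letters. -/
def IsBalancedSeq (w : ℕ → Fin 2) : Prop :=
  ∀ u v : List (Fin 2), (∃ k, occursAt w u k) → (∃ k, occursAt w v k) →
    u.length = v.length → |(u.count 0 : ℤ) - (v.count 0 : ℤ)| ≤ 1

/-- The Sturmian substitution `σ₁ : 1 ↦ 1, 2 ↦ 21` (letters `1, 2` are `0, 1 : Fin 2`). -/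
def sturmSub1 (a : Fin 2) : List (Fin 2) := if a = 0 then [0] else [1, 0]

/-- The image of an infinite sequence under a (nonerasing) substitution:
the `n`-th letter of the concatenation `s (u 0) s (u 1) s (u 2) ⋯`. -/
def subApply (s : Fin 2 → List (Fin 2)) (u : ℕ → Fin 2) (n : ℕ) : Fin 2 :=
  (((List.range (n + 1)).map u).flatMap s).getD n 0

/-- Prepend a letter to an infinite sequence. -/
def prepend (a : Fin 2) (w : ℕ → Fin 2) : ℕ → Fin 2 :=
  fun n => match n with
  | 0 => a
  | m + 1 => w m

/-!
Write `0, 1` for the letters `1, 2`. If `w` is not balanced, it has factors `u, v` of equal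
length with `|u|₀ = |v|₀ + 2`: take two unbalanced factors and cut both at the first length where
their counts of `0` differ by exactly `2`. Every image `σ₁(x)` of a letter contains exactly one `0`
and ends with it, so `|σ₁(u)|₀ = |u|` and `|σ₁(u)| = 2|u| - |u|₀`. In `σ₁(aw)` the block `σ₁(u)`
is preceded by the final `0` of the image of the letter before `u` (this is what `a` is for), and
`σ₁(v)` ends in `0`. Hence `0σ₁(u)` and `σ₁(v)` minus its last letter are factors of `σ₁(aw)` of
the same length containing `|u| + 1` and `|v| - 1` zeros.
-/

namespace occursAt

variable {w : ℕ → Fin 2} {v : List (Fin 2)} {k : ℕ}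

lemma take (m : ℕ) (h : occursAt w v k) : occursAt w (v.take m) k := by
  intro i hi
  have hi' : i < v.length := by rw [List.length_take] at hi; omega
  rw [List.getD_eq_getElem _ _ hi, List.getElem_take, ← List.getD_eq_getElem _ 0 hi']
  exact h i hi'

lemma drop (m : ℕ) (h : occursAt w v k) : occursAt w (v.drop m) (k + m) := by
  intro i hi
  have hi' : m + i < v.length := by rw [List.length_drop] at hi; omega
  rw [List.getD_eq_getElem _ _ hi, List.getElem_drop, ← List.getD_eq_getElem _ 0 hi', h _ hi',
    add_assoc]

lemma cons (h : occursAt w v (k + 1)) : occursAt w (w k :: v) k := by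
  rintro (_ | i) hi
  · rfl
  · simpa [Nat.add_right_comm k 1 i, add_assoc] using h i (by simpa using hi)

lemma prepend (a : Fin 2) (h : occursAt w v k) : occursAt (prepend a w) v (k + 1) := by
  intro i hi
  simpa [_root_.prepend, Nat.add_right_comm k 1 i] using h i hi

lemma map_range_eq (h : occursAt w v k) : (List.range v.length).map (fun i => w (k + i)) = v :=
  List.ext_getElem (by simp) fun i _ hi => by
    rw [List.getElem_map, List.getElem_range, ← h i hi, List.getD_eq_getElem _ _ hi]

end occursAt

section imagePrefix

variable {s : Fin 2 → List (Fin 2)} {u : ℕ → Fin 2}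

def imagePrefix (s : Fin 2 → List (Fin 2)) (u : ℕ → Fin 2) (n : ℕ) : List (Fin 2) :=
  ((List.range n).map u).flatMap s

lemma imagePrefix_add (m n : ℕ) :
    imagePrefix s u (m + n) =
      imagePrefix s u m ++ ((List.range n).map fun i => u (m + i)).flatMap s := by
  simp [imagePrefix, List.range_add, List.map_map, Function.comp_def]

lemma imagePrefix_succ (n : ℕ) : imagePrefix s u (n + 1) = imagePrefix s u n ++ s (u n) := by
  simp [imagePrefix, List.range_succ]

lemma le_length_imagePrefix (hs : ∀ x, s x ≠ []) (n : ℕ) : n ≤ (imagePrefix s u n).length := by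
  induction n with
  | zero => simp
  | succ n ih =>
    have := List.length_pos_of_ne_nil (hs (u n))
    rw [imagePrefix_succ, List.length_append]
    omega

lemma subApply_eq_getD_imagePrefix (hs : ∀ x, s x ≠ []) {n m : ℕ}
    (h : n < (imagePrefix s u m).length) : subApply s u n = (imagePrefix s u m).getD n 0 := by
  change (imagePrefix s u (n + 1)).getD n 0 = _
  rcases le_total m (n + 1) with hm | hm
  · obtain ⟨d, hd⟩ := Nat.exists_eq_add_of_le hm
    rw [hd, imagePrefix_add m d, List.getD_append _ _ _ _ h]
  · obtain ⟨d, hd⟩ := Nat.exists_eq_add_of_le hm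
    rw [hd, imagePrefix_add (n + 1) d, List.getD_append _ _ _ _ (le_length_imagePrefix hs _)]

lemma occursAt.subApply (hs : ∀ x, s x ≠ []) {v : List (Fin 2)} {k : ℕ} (h : occursAt u v k) :
    occursAt (subApply s u) (v.flatMap s) (imagePrefix s u k).length := by
  have hk : imagePrefix s u (k + v.length) = imagePrefix s u k ++ v.flatMap s := by
    rw [imagePrefix_add, h.map_range_eq]
  intro i hi
  have hlt : (imagePrefix s u k).length + i < (imagePrefix s u (k + v.length)).length := by
    rw [hk, List.length_append]; omega
  rw [subApply_eq_getD_imagePrefix hs hlt, hk, List.getD_append_right _ _ _ _ (by omega),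
    Nat.add_sub_cancel_left]

end imagePrefix

namespace List

variable {α : Type*} [BEq α]

lemma count_take_le_count_take_succ (l : List α) (a : α) (m : ℕ) :
    (l.take m).count a ≤ (l.take (m + 1)).count a :=
  (List.take_prefix_take_left (Nat.le_succ m)).sublist.count_le a

lemma count_take_succ_le (l : List α) (a : α) (m : ℕ) :
    (l.take (m + 1)).count a ≤ (l.take m).count a + 1 := by
  rw [List.take_add_one, List.count_append]
  have : (l[m]?.toList).count a ≤ 1 :=
    List.count_le_length.trans (by cases l[m]? <;> simp)
  omega

/-- The difference of the counts along common prefix lengths changes by at most one per step,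
so it cannot jump from `0` past `2`. -/
lemma exists_count_take_eq_add_two {u v : List α} {a : α} (h : v.count a + 2 ≤ u.count a) :
    ∃ m, (u.take m).count a = (v.take m).count a + 2 := by
  by_contra! hne
  have hle : ∀ m, (u.take m).count a ≤ (v.take m).count a + 1 := by
    intro m
    induction m with
    | zero => simp
    | succ m ih =>
      have := count_take_succ_le u a m
      have := count_take_le_count_take_succ v a m
      have := hne (m + 1)
      omega
  have hu := hle u.length
  rw [List.take_length] at hu
  have hv := (List.take_sublist u.length v).count_le a
  omega

end List

lemma exists_occursAt_count_zero_eq_add_two_of_not_isBalancedSeq {w : ℕ → Fin 2}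
    (hw : ¬ IsBalancedSeq w) :
    ∃ u v ku kv, occursAt w u ku ∧ occursAt w v kv ∧ u.length = v.length ∧
      u.count 0 = v.count 0 + 2 := by
  have of_le : ∀ u v ku kv, occursAt w u ku → occursAt w v kv → u.length = v.length →
      v.count 0 + 2 ≤ u.count 0 → ∃ u v ku kv, occursAt w u ku ∧ occursAt w v kv ∧
        u.length = v.length ∧ u.count 0 = v.count 0 + 2 := by
    intro u v ku kv hu hv hlen hcount
    obtain ⟨m, hm⟩ := List.exists_count_take_eq_add_two hcount
    exact ⟨_, _, ku, kv, hu.take m, hv.take m, by simp [hlen], hm⟩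
  simp only [IsBalancedSeq, not_forall, not_le, exists_prop] at hw
  obtain ⟨u, v, ⟨ku, hu⟩, ⟨kv, hv⟩, hlen, hcount⟩ := hw
  rcases lt_abs.mp hcount with hcount | hcount
  · exact of_le u v ku kv hu hv hlen (by omega)
  · exact of_le v u kv ku hv hu hlen.symm (by omega)

lemma sturmSub1_ne_nil (x : Fin 2) : sturmSub1 x ≠ [] := by
  unfold sturmSub1; split <;> simp

lemma exists_sturmSub1_eq_append_zero (x : Fin 2) : ∃ D, sturmSub1 x = D ++ [0] := by
  unfold sturmSub1; split
  exacts [⟨[], rfl⟩, ⟨[1], rfl⟩]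

lemma exists_flatMap_sturmSub1_eq_append_zero {v : List (Fin 2)} (hv : v ≠ []) :
    ∃ D, v.flatMap sturmSub1 = D ++ [0] := by
  obtain ⟨L, x, rfl⟩ := (List.eq_nil_or_concat' v).resolve_left hv
  obtain ⟨D, hD⟩ := exists_sturmSub1_eq_append_zero x
  exact ⟨L.flatMap sturmSub1 ++ D, by simp [hD]⟩

lemma count_zero_flatMap_sturmSub1 (v : List (Fin 2)) :
    (v.flatMap sturmSub1).count 0 = v.length := by
  induction v with
  | nil => rfl
  | cons x v ih => fin_cases x <;> simp [sturmSub1, ih]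

lemma length_flatMap_sturmSub1_add_count_zero (v : List (Fin 2)) :
    (v.flatMap sturmSub1).length + v.count 0 = 2 * v.length := by
  induction v with
  | nil => rfl
  | cons x v ih =>
    rw [List.flatMap_cons, List.length_append, List.count_cons, List.length_cons]
    fin_cases x <;> simp [sturmSub1, -List.length_flatMap] <;> omega

theorem not_isBalancedSeq_subApply_sturmSub1_prepend {w : ℕ → Fin 2} {u v : List (Fin 2)}
    {ku kv : ℕ} (a : Fin 2) (hu : occursAt w u ku) (hv : occursAt w v kv)
    (hlen : u.length = v.length) (hcount : u.count 0 = v.count 0 + 2) :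
    ¬ IsBalancedSeq (subApply sturmSub1 (prepend a w)) := by
  have hv_ne : v ≠ [] := by
    rintro rfl
    have := u.count_le_length (a := 0)
    rw [hlen, hcount, List.length_nil, List.count_nil] at this
    omega
  obtain ⟨D, hD⟩ := exists_sturmSub1_eq_append_zero (prepend a w ku)
  have hX : ∃ k, occursAt (subApply sturmSub1 (prepend a w)) (0 :: u.flatMap sturmSub1) k := by
    have := ((hu.prepend a).cons.subApply sturmSub1_ne_nil).drop D.length
    exact ⟨_, by simpa [hD] using this⟩
  obtain ⟨E, hE⟩ := exists_flatMap_sturmSub1_eq_append_zero hv_ne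
  have hY : ∃ k, occursAt (subApply sturmSub1 (prepend a w)) E k := by
    have := ((hv.prepend a).subApply sturmSub1_ne_nil).take E.length
    exact ⟨_, by simpa [hE] using this⟩
  have hElen : E.length + 1 = (v.flatMap sturmSub1).length := by simp [hE]
  have hEcount : E.count 0 + 1 = v.length := by
    rw [← count_zero_flatMap_sturmSub1, hE, List.count_append]
    rfl
  have hulen := length_flatMap_sturmSub1_add_count_zero u
  have hvlen := length_flatMap_sturmSub1_add_count_zero v
  intro hbal
  have := abs_le.mp (hbal _ _ hX hY (by rw [List.length_cons]; omega))
  rw [List.count_cons_self, count_zero_flatMap_sturmSub1] at this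
  omega

/-- If `w` is not balanced then `σ₁(aw)` is not balanced, for each letter `a`. -/
theorem stmt3 (w : ℕ → Fin 2) (hw : ¬ IsBalancedSeq w) (a : Fin 2) :
    ¬ IsBalancedSeq (subApply sturmSub1 (prepend a w)) := by
  obtain ⟨u, v, ku, kv, hu, hv, hlen, hcount⟩ :=
    exists_occursAt_count_zero_eq_add_two_of_not_isBalancedSeq hw
  exact not_isBalancedSeq_subApply_sturmSub1_prepend a hu hv hlen hcount
end

section
/- If a sequence w ∈ {1,2}^ℕ is not balanced, then there exists a finite word v ∈ {1,2}* such that both 1v1 and 2v2 are factors of w. -/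
lemma occursAt_append {w : ℕ → Fin 2} {a b : List (Fin 2)} {k : ℕ} :
    occursAt w (a ++ b) k ↔ occursAt w a k ∧ occursAt w b (k + a.length) := by
  constructor
  · intro h
    constructor
    · intro i hi
      have := h i (by simp; omega)
      rwa [List.getD_append _ _ _ _ hi] at this
    · intro i hi
      have := h (a.length + i) (by simp; omega)
      rw [List.getD_append_right _ _ _ _ (by omega)] at this
      simpa [Nat.add_assoc] using this
  · rintro ⟨h1, h2⟩ i hi
    rcases lt_or_ge i a.length with h | h
    · rw [List.getD_append _ _ _ _ h]; exact h1 i h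
    · rw [List.getD_append_right _ _ _ _ h]
      have := h2 (i - a.length) (by simp at hi; omega)
      rw [this]; congr 1; omega

lemma occursAt_cons {w : ℕ → Fin 2} {c : Fin 2} {u : List (Fin 2)} {k : ℕ} :
    occursAt w (c :: u) k ↔ c = w k ∧ occursAt w u (k + 1) := by
  have := occursAt_append (w := w) (a := [c]) (b := u) (k := k)
  simp only [List.singleton_append, List.length_singleton] at this
  rw [this]
  constructor
  · rintro ⟨h1, h2⟩
    exact ⟨by simpa using h1 0 (by simp), h2⟩
  · rintro ⟨h1, h2⟩
    refine ⟨?_, h2⟩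
    intro i hi
    simp at hi
    subst hi
    simpa using h1

lemma key (w : ℕ → Fin 2) (N : ℕ)
    (hmin : ∀ a b : List (Fin 2), (∃ k, occursAt w a k) → (∃ k, occursAt w b k) →
      a.length = b.length → a.length < N → (a.count 0 : ℤ) ≤ b.count 0 + 1) :
    ∀ (u v : List (Fin 2)) (k l : ℕ),
      occursAt w u k → occursAt w v l → u.length = v.length → u.length < N →
      (v.count 0 : ℤ) + 1 ≤ u.count 0 →
      ∃ t s s', u = t ++ 0 :: s ∧ v = t ++ 1 :: s' := by
  intro u
  induction u with
  | nil =>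
    intro v k l _ _ hlen _ hc
    have : v = [] := List.eq_nil_of_length_eq_zero hlen.symm
    subst this; simp at hc
  | cons c u'' ih =>
    intro v k l hu hv hlen hN hc
    match v with
    | [] => simp at hlen
    | d :: v'' =>
      have hu' : occursAt w u'' (k + 1) := (occursAt_cons.mp hu).2
      have hv' : occursAt w v'' (l + 1) := (occursAt_cons.mp hv).2
      have hlen' : u''.length = v''.length := by simpa using hlen
      have hN' : u''.length < N := by simp at hN ⊢; omega
      fin_cases c <;> fin_cases d
      · -- 0,0
        have hc' : (v''.count 0 : ℤ) + 1 ≤ u''.count 0 := by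
          simp [List.count_cons] at hc; omega
        obtain ⟨t, s, s', h1, h2⟩ := ih v'' (k+1) (l+1) hu' hv' hlen' hN' hc'
        exact ⟨0 :: t, s, s', by simp [h1], by simp [h2]⟩
      · -- 0,1
        exact ⟨[], u'', v'', rfl, rfl⟩
      · -- 1,0
        exfalso
        have := hmin u'' v'' ⟨k+1, hu'⟩ ⟨l+1, hv'⟩ hlen' hN'
        simp [List.count_cons] at hc
        push_cast at hc this
        omega
      · -- 1,1
        have hc' : (v''.count 0 : ℤ) + 1 ≤ u''.count 0 := by
          simp [List.count_cons] at hc; omega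
        obtain ⟨t, s, s', h1, h2⟩ := ih v'' (k+1) (l+1) hu' hv' hlen' hN' hc'
        exact ⟨1 :: t, s, s', by simp [h1], by simp [h2]⟩

/-- If `w` is not balanced then there is a word `v` with both `1v1` and `2v2`
factors of `w` (letters `1, 2` are `0, 1 : Fin 2`). -/
theorem stmt4 (w : ℕ → Fin 2) (hw : ¬ IsBalancedSeq w) :
    ∃ v : List (Fin 2),
      (∃ k, occursAt w (0 :: v ++ [0]) k) ∧ (∃ k, occursAt w (1 :: v ++ [1]) k) := by
  classical
  -- P n : there is a bad pair of length n
  set P : ℕ → Prop := fun n => ∃ u v : List (Fin 2), ∃ k l : ℕ,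
    occursAt w u k ∧ occursAt w v l ∧ u.length = n ∧ v.length = n ∧
    (v.count 0 : ℤ) + 2 ≤ u.count 0 with hP
  have hex : ∃ n, P n := by
    unfold IsBalancedSeq at hw
    push_neg at hw
    obtain ⟨u, v, ⟨k, hk⟩, ⟨l, hl⟩, hlen, habs⟩ := hw
    have hd : (v.count 0 : ℤ) + 2 ≤ u.count 0 ∨ (u.count 0 : ℤ) + 2 ≤ v.count 0 := by
      rcases abs_cases ((u.count 0 : ℤ) - v.count 0) with ⟨h, _⟩ | ⟨h, _⟩ <;> omega
    rcases hd with h | h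
    · exact ⟨u.length, u, v, k, l, hk, hl, rfl, hlen ▸ rfl, h⟩
    · exact ⟨v.length, v, u, l, k, hl, hk, rfl, hlen.symm ▸ rfl, h⟩
  set n := Nat.find hex with hn
  obtain ⟨u, v, k, l, hu, hv, hul, hvl, hc⟩ := Nat.find_spec hex
  have hmin : ∀ a b : List (Fin 2), (∃ k, occursAt w a k) → (∃ k, occursAt w b k) →
      a.length = b.length → a.length < n → (a.count 0 : ℤ) ≤ b.count 0 + 1 := by
    intro a b ⟨ka, ha⟩ ⟨kb, hb⟩ hab hlt
    by_contra hcon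
    exact Nat.find_min hex hlt ⟨a, b, ka, kb, ha, hb, rfl, hab.symm, by omega⟩
  -- n ≥ 1, split heads
  match u, v with
  | [], [] => simp at hc
  | [], d :: v' => exfalso; simp at hul hvl; omega
  | c :: u', [] => exfalso; simp at hul hvl; omega
  | c :: u', d :: v' =>
    have hu' : occursAt w u' (k + 1) := (occursAt_cons.mp hu).2
    have hv' : occursAt w v' (l + 1) := (occursAt_cons.mp hv).2
    have hlen' : u'.length = v'.length := by simp at hul hvl; omega
    have hlt : u'.length < n := by simp at hul; omega
    have hc0 : c = 0 ∧ d = 1 := by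
      by_contra hcd
      fin_cases c <;> fin_cases d <;> simp at hcd <;>
      · refine Nat.find_min hex hlt ⟨u', v', k+1, l+1, hu', hv', rfl, hlen'.symm, ?_⟩
        simp [List.count_cons] at hc
        omega
    obtain ⟨rfl, rfl⟩ := hc0
    have hc' : (v'.count 0 : ℤ) + 1 ≤ u'.count 0 := by
      simp [List.count_cons] at hc; omega
    obtain ⟨t, s, s', h1, h2⟩ := key w n hmin u' v' (k+1) (l+1) hu' hv' hlen' hlt hc'
    refine ⟨t, ⟨k, ?_⟩, ⟨l, ?_⟩⟩
    · have : (0 : Fin 2) :: (t ++ [0]) ++ s = (0 : Fin 2) :: u' := by simp [h1]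
      have := this ▸ hu
      exact (occursAt_append.mp (by simpa using this)).1
    · have : (1 : Fin 2) :: (t ++ [1]) ++ s' = (1 : Fin 2) :: v' := by simp [h2]
      have := this ▸ hv
      exact (occursAt_append.mp (by simpa using this)).1
end

section
/- Let w ∈ A^ℕ be a sequence over a finite alphabet with uniform word frequencies, and let X_w be the closure of the shift orbit of w. Then the topological dynamical system (X_w, Σ) is uniquely ergodic. -/
open MeasureTheory

/-- The word `v` occurs in the sequence `w` at position `k`. -/
def occursAtG {A : Type*} (w : ℕ → A) (v : List A) (k : ℕ) : Prop :=
  ∀ i < v.length, v.getD i (w 0) = w (k + i)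

/-- The number of occurrences of the word `v` in the window `w_k ⋯ w_{k+ℓ-1}`. -/
noncomputable def countOcc {A : Type*} (w : ℕ → A) (v : List A) (k ℓ : ℕ) : ℕ :=
  Set.ncard {j : ℕ | j + v.length ≤ ℓ ∧ occursAtG w v (k + j)}

/-- `w` has uniform word frequencies: for every finite word `v` the frequency of `v`
in windows of length `ℓ` converges as `ℓ → ∞`, uniformly in the starting position. -/
def UniformWordFrequencies {A : Type*} (w : ℕ → A) : Prop :=
  ∀ v : List A, ∃ f : ℝ, ∀ ε > (0 : ℝ), ∃ L : ℕ, ∀ ℓ ≥ L, ∀ k : ℕ,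
    |(countOcc w v k ℓ : ℝ) / ℓ - f| < ε

/-- The shift on `A^ℕ`. -/
def shiftMap {A : Type*} : (ℕ → A) → (ℕ → A) := fun u n => u (n + 1)

/-!
Existence is the Krylov–Bogolyubov argument: the empirical measures along the orbit of `w` have
a weak limit point, which is shift-invariant and lives on the closed invariant set `X_w`.

For uniqueness, let `ν` be an invariant probability measure on `X_w` and `[v]` a word cylinder.
By invariance `ν [v]` is the integral of the Birkhoff average of the indicator of `[v]`. At the
point `Σ^k w` this average is `|w_k ⋯ w_{k+ℓ-1}|_v / ℓ` up to `(|v| + 1) / ℓ`, so by uniformity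
of the frequencies, and since `[v]` is clopen, the averages converge to `f_v(w)` uniformly on
`X_w`. Hence `ν [v] = f_v(w)` for every word `v`, and the cylinders determine `ν`.
-/

open Filter Topology Set
open scoped ENNReal NNReal BoundedContinuousFunction Finset

section BirkhoffAverage

variable {X E : Type*} [MeasurableSpace X] [NormedAddCommGroup E] [NormedSpace ℝ E]
  {T : X → X} {μ : Measure X}

theorem MeasureTheory.MeasurePreserving.integral_comp_iterate (hT : MeasurePreserving T μ μ)
    {g : X → E} (hg : Integrable g μ) (k : ℕ) : ∫ x, g (T^[k] x) ∂μ = ∫ x, g x ∂μ := by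
  have hTk := hT.iterate k
  rw [← integral_map hTk.aemeasurable (hTk.map_eq.symm ▸ hg.aestronglyMeasurable), hTk.map_eq]

theorem MeasureTheory.MeasurePreserving.integrable_birkhoffAverage (hT : MeasurePreserving T μ μ)
    {g : X → E} (hg : Integrable g μ) (n : ℕ) : Integrable (birkhoffAverage ℝ T g n) μ :=
  (integrable_finsetSum _ fun k _ => (hT.iterate k).integrable_comp_of_integrable hg).smul _

theorem MeasureTheory.MeasurePreserving.integral_birkhoffAverage (hT : MeasurePreserving T μ μ)
    {g : X → E} (hg : Integrable g μ) {n : ℕ} (hn : n ≠ 0) :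
    ∫ x, birkhoffAverage ℝ T g n x ∂μ = ∫ x, g x ∂μ := by
  simp only [birkhoffAverage, birkhoffSum]
  rw [integral_smul, integral_finsetSum (f := fun k a => g (T^[k] a)) _ fun k _ =>
      (hT.iterate k).integrable_comp_of_integrable hg,
    Finset.sum_congr rfl fun k _ => hT.integral_comp_iterate hg k, Finset.sum_const,
    Finset.card_range, ← Nat.cast_smul_eq_nsmul ℝ, smul_smul,
    inv_mul_cancel₀ (Nat.cast_ne_zero.2 hn), one_smul]

theorem birkhoffAverage_comp_apply {α M : Type*} [AddCommMonoid M] (R : Type*)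
    [DivisionSemiring R] [Module R M] (f : α → α) (g : α → M) (n : ℕ) (x : α) :
    birkhoffAverage R f (g ∘ f) n x = birkhoffAverage R f g n (f x) := by
  simp only [birkhoffAverage, birkhoffSum, Function.comp_apply, ← Function.iterate_succ_apply' f,
    Function.iterate_succ_apply]

theorem continuous_birkhoffAverage {α M : Type*} [TopologicalSpace α] [TopologicalSpace M]
    [AddCommMonoid M] [ContinuousAdd M] (R : Type*) [DivisionSemiring R] [Module R M]
    [ContinuousConstSMul R M] {f : α → α} {g : α → M} (hf : Continuous f) (hg : Continuous g)
    (n : ℕ) : Continuous (birkhoffAverage R f g n) :=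
  (continuous_finsetSum _ fun k _ => hg.comp (hf.iterate k)).const_smul _

end BirkhoffAverage

section KrylovBogolyubov

variable {X : Type*} [MeasurableSpace X]

/- The empirical measures `n⁻¹ ∑_{k<n} δ_{T^k x}` are Birkhoff averages of `dirac`, with scalars
in `ℝ≥0` because `ℝ≥0∞` is not a `DivisionSemiring`. -/
theorem birkhoffAverage_dirac_apply_eq_one {T : X → X} {x : X} {K : Set X}
    (hK : ∀ k, T^[k] x ∈ K) {n : ℕ} (hn : n ≠ 0) :
    birkhoffAverage ℝ≥0 T Measure.dirac n x K = 1 := by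
  simp only [birkhoffAverage, birkhoffSum, Measure.smul_apply, Measure.coe_finsetSum,
    Finset.sum_apply, Measure.dirac_apply_of_mem (hK _), Finset.sum_const, Finset.card_range,
    nsmul_eq_mul, mul_one, ENNReal.smul_def, smul_eq_mul]
  rw [← ENNReal.coe_natCast, ← ENNReal.coe_mul, inv_mul_cancel₀ (by simpa), ENNReal.coe_one]

theorem isProbabilityMeasure_birkhoffAverage_dirac (T : X → X) (x : X) {n : ℕ} (hn : n ≠ 0) :
    IsProbabilityMeasure (birkhoffAverage ℝ≥0 T Measure.dirac n x) :=
  ⟨birkhoffAverage_dirac_apply_eq_one (fun _ => mem_univ _) hn⟩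

theorem integral_birkhoffAverage_dirac [TopologicalSpace X] [OpensMeasurableSpace X] (T : X → X)
    (x : X) (n : ℕ) (g : X →ᵇ ℝ) :
    ∫ y, g y ∂(birkhoffAverage ℝ≥0 T Measure.dirac n x) = birkhoffAverage ℝ T g n x := by
  simp only [birkhoffAverage, birkhoffSum]
  rw [integral_smul_nnreal_measure, integral_finsetSum_measure fun k _ => g.integrable _]
  simp only [integral_dirac' _ _ g.continuous.stronglyMeasurable, NNReal.smul_def, NNReal.coe_inv,
    NNReal.coe_natCast, smul_eq_mul]

theorem exists_isProbabilityMeasure_map_eq_self_of_mapsTo [TopologicalSpace X] [CompactSpace X]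
    [TopologicalSpace.MetrizableSpace X] [BorelSpace X] {T : X → X} (hT : Continuous T)
    {K : Set X} (hK : IsClosed K) (hTK : MapsTo T K K) {x : X} (hx : x ∈ K) :
    ∃ μ : Measure X, IsProbabilityMeasure μ ∧ μ Kᶜ = 0 ∧ μ.map T = μ := by
  let ν : ℕ → ProbabilityMeasure X := fun n =>
    ⟨birkhoffAverage ℝ≥0 T Measure.dirac (n + 1) x,
      isProbabilityMeasure_birkhoffAverage_dirac T x n.succ_ne_zero⟩
  obtain ⟨μ, -, φ, hφ, hνμ⟩ := isCompact_univ.tendsto_subseq (x := ν) fun _ => mem_univ _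
  refine ⟨(μ : Measure X), inferInstance, ?_, ?_⟩
  · rw [prob_compl_eq_zero_iff hK.measurableSet]
    refine le_antisymm prob_le_one ?_
    have hνK (n : ℕ) : (ν n : Measure X) K = 1 :=
      birkhoffAverage_dirac_apply_eq_one (fun k => hTK.iterate k hx) n.succ_ne_zero
    calc (1 : ℝ≥0∞) = atTop.limsup fun n => ((ν ∘ φ) n : Measure X) K := by
          simp only [Function.comp_apply, hνK, limsup_const]
      _ ≤ (μ : Measure X) K := ProbabilityMeasure.limsup_measure_closed_le_of_tendsto hνμ hK
  · refine ext_of_forall_integral_eq_of_IsFiniteMeasure fun g => ?_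
    rw [integral_map hT.aemeasurable g.continuous.aestronglyMeasurable]
    let gT : X →ᵇ ℝ := g.compContinuous ⟨T, hT⟩
    have hcont (h : X →ᵇ ℝ) :=
      (ProbabilityMeasure.continuous_integral_boundedContinuousFunction h).tendsto μ |>.comp hνμ
    have hlim : Tendsto (fun n => ∫ y, gT y ∂(ν (φ n)) - ∫ y, g y ∂(ν (φ n))) atTop
        (𝓝 (∫ y, gT y ∂μ - ∫ y, g y ∂μ)) := (hcont gT).sub (hcont g)
    have hzero : Tendsto (fun n => ∫ y, gT y ∂(ν (φ n)) - ∫ y, g y ∂(ν (φ n))) atTop (𝓝 0) := by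
      have hgT : ⇑gT = g ∘ T := rfl
      simp only [ν, ProbabilityMeasure.coe_mk, integral_birkhoffAverage_dirac]
      simp only [hgT, birkhoffAverage_comp_apply]
      exact (tendsto_birkhoffAverage_apply_sub_birkhoffAverage' ℝ g.isBounded_range T x).comp
        ((tendsto_add_atTop_nat 1).comp hφ.tendsto_atTop)
    exact sub_eq_zero.1 (tendsto_nhds_unique hlim hzero)

end KrylovBogolyubov

section Shift

variable {A : Type*}

def wordCylinder (v : List A) : Set (ℕ → A) := {x | ∀ i (hi : i < v.length), x i = v[i]}

theorem shiftMap_iterate_apply (k : ℕ) (x : ℕ → A) (n : ℕ) : shiftMap^[k] x n = x (n + k) := by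
  induction k generalizing x with
  | zero => rfl
  | succ k ih => rw [Function.iterate_succ_apply, ih]; simp only [shiftMap]; ring_nf

theorem continuous_shiftMap [TopologicalSpace A] : Continuous (shiftMap : (ℕ → A) → (ℕ → A)) :=
  continuous_pi fun n => continuous_apply (n + 1)

theorem measurable_shiftMap [MeasurableSpace A] : Measurable (shiftMap : (ℕ → A) → (ℕ → A)) :=
  measurable_pi_iff.2 fun n => measurable_pi_apply (n + 1)

theorem mapsTo_shiftMap_closure_orbit [TopologicalSpace A] (w : ℕ → A) :
    MapsTo shiftMap (closure {x | ∃ k : ℕ, x = fun n => w (n + k)})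
      (closure {x | ∃ k : ℕ, x = fun n => w (n + k)}) := by
  refine MapsTo.closure ?_ continuous_shiftMap
  rintro _ ⟨k, rfl⟩
  exact ⟨k + 1, funext fun n => by simp only [shiftMap]; ring_nf⟩

theorem wordCylinder_eq_iInter (v : List A) :
    wordCylinder v = ⋂ i : Fin v.length, (fun x : ℕ → A => x i) ⁻¹' {v[i]} := by
  ext x
  simp [wordCylinder, Fin.forall_iff]

theorem isClopen_wordCylinder [TopologicalSpace A] [DiscreteTopology A] (v : List A) :
    IsClopen (wordCylinder v) := by
  rw [wordCylinder_eq_iInter]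
  exact isClopen_iInter_of_finite fun i => (isClopen_discrete _).preimage (continuous_apply _)

theorem measurableSet_wordCylinder [MeasurableSpace A] [MeasurableSingletonClass A] (v : List A) :
    MeasurableSet (wordCylinder v) := by
  rw [wordCylinder_eq_iInter]
  exact MeasurableSet.iInter fun i => measurable_pi_apply _ (measurableSet_singleton _)

theorem iterate_shiftMap_mem_wordCylinder_iff {w : ℕ → A} {v : List A} {k j : ℕ} :
    shiftMap^[j] (fun n => w (n + k)) ∈ wordCylinder v ↔ occursAtG w v (k + j) := by
  simp only [wordCylinder, occursAtG, mem_ofPred_eq, shiftMap_iterate_apply]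
  refine forall_congr' fun i => forall_congr' fun hi => ?_
  rw [List.getD_eq_getElem _ _ hi, eq_comm, show i + j + k = k + j + i by ring]

theorem card_filter_range_le_add (p : ℕ → Prop) [DecidablePred p] (a b : ℕ) :
    #{j ∈ Finset.range b | p j} ≤ #{j ∈ Finset.range a | p j} + (b - a) := by
  calc #{j ∈ Finset.range b | p j}
      ≤ #{j ∈ Finset.range a ∪ Finset.Ico a b | p j} :=
        Finset.card_le_card (Finset.filter_subset_filter _ fun j hj => by
          simp only [Finset.mem_union, Finset.mem_range, Finset.mem_Ico] at hj ⊢; omega)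
    _ ≤ #{j ∈ Finset.range a | p j} + #(Finset.Ico a b) := by
        rw [Finset.filter_union]
        exact (Finset.card_union_le _ _).trans (Nat.add_le_add_left (Finset.card_filter_le _ _) _)
    _ = #{j ∈ Finset.range a | p j} + (b - a) := by rw [Nat.card_Ico]

open Classical in
theorem countOcc_eq_card_filter (w : ℕ → A) (v : List A) (k ℓ : ℕ) :
    countOcc w v k ℓ = #{j ∈ Finset.range (ℓ + 1 - v.length) | occursAtG w v (k + j)} := by
  rw [countOcc, ← Set.ncard_coe_finset]
  congr 1
  ext j
  simp only [Finset.coe_filter, Finset.mem_range, mem_ofPred_eq]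
  exact and_congr_left fun _ => by omega

open Classical in
theorem birkhoffSum_indicator_wordCylinder (w : ℕ → A) (v : List A) (k ℓ : ℕ) :
    birkhoffSum shiftMap ((wordCylinder v).indicator (1 : (ℕ → A) → ℝ)) ℓ (fun n => w (n + k))
      = #{j ∈ Finset.range ℓ | occursAtG w v (k + j)} := by
  simp only [birkhoffSum, indicator_apply, iterate_shiftMap_mem_wordCylinder_iff, Pi.one_apply,
    Finset.sum_boole]

theorem abs_birkhoffAverage_indicator_wordCylinder_sub_le (w : ℕ → A) (v : List A) (k ℓ : ℕ) :
    |birkhoffAverage ℝ shiftMap ((wordCylinder v).indicator 1) ℓ (fun n => w (n + k))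
        - (countOcc w v k ℓ : ℝ) / ℓ| ≤ (v.length + 1) / ℓ := by
  classical
  -- `countOcc` counts the occurrences lying inside the window, the Birkhoff sum those starting in it.
  set S := #{j ∈ Finset.range ℓ | occursAtG w v (k + j)}
  have hcount : countOcc w v k ℓ ≤ S + 1 := by
    have := card_filter_range_le_add (fun j => occursAtG w v (k + j)) ℓ (ℓ + 1 - v.length)
    rw [countOcc_eq_card_filter]; omega
  have hS : S ≤ countOcc w v k ℓ + v.length := by
    have := card_filter_range_le_add (fun j => occursAtG w v (k + j)) (ℓ + 1 - v.length) ℓ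
    rw [countOcc_eq_card_filter]; omega
  rw [birkhoffAverage, birkhoffSum_indicator_wordCylinder, smul_eq_mul, inv_mul_eq_div,
    ← sub_div, abs_div, Nat.abs_cast]
  gcongr
  rw [abs_le]
  have hcount' : (countOcc w v k ℓ : ℝ) ≤ S + 1 := by exact_mod_cast hcount
  have hS' : (S : ℝ) ≤ countOcc w v k ℓ + v.length := by exact_mod_cast hS
  constructor <;> linarith

theorem eventually_forall_mem_closure_abs_birkhoffAverage_sub_le [TopologicalSpace A]
    [DiscreteTopology A] {w : ℕ → A} {v : List A} {f : ℝ}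
    (hf : ∀ ε > (0 : ℝ), ∃ L : ℕ, ∀ ℓ ≥ L, ∀ k : ℕ, |(countOcc w v k ℓ : ℝ) / ℓ - f| < ε)
    {ε : ℝ} (hε : 0 < ε) :
    ∀ᶠ ℓ in atTop, ∀ x ∈ closure {x | ∃ k : ℕ, x = fun n => w (n + k)},
      |birkhoffAverage ℝ shiftMap ((wordCylinder v).indicator 1) ℓ x - f| ≤ ε := by
  obtain ⟨L, hL⟩ := hf (ε / 2) (half_pos hε)
  have hsmall : ∀ᶠ ℓ : ℕ in atTop, ((v.length : ℝ) + 1) / ℓ < ε / 2 :=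
    (tendsto_order.1 (tendsto_const_div_atTop_nhds_zero_nat _)).2 _ (half_pos hε)
  filter_upwards [hsmall, eventually_ge_atTop L] with ℓ hℓ hLℓ x hx
  set g := birkhoffAverage ℝ shiftMap ((wordCylinder v).indicator (1 : (ℕ → A) → ℝ)) ℓ
  have horbit : MapsTo g {x | ∃ k : ℕ, x = fun n => w (n + k)} (Metric.closedBall f ε) := by
    rintro _ ⟨k, rfl⟩
    rw [Metric.mem_closedBall, Real.dist_eq]
    have h₁ := abs_birkhoffAverage_indicator_wordCylinder_sub_le w v k ℓ
    have h₂ := hL ℓ hLℓ k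
    calc _ ≤ |g (fun n => w (n + k)) - (countOcc w v k ℓ : ℝ) / ℓ|
          + |(countOcc w v k ℓ : ℝ) / ℓ - f| := abs_sub_le _ _ _
      _ ≤ ε := by linarith
  have hcont : Continuous g := continuous_birkhoffAverage ℝ continuous_shiftMap
    ((isClopen_wordCylinder v).continuous_indicator continuous_const) ℓ
  have := map_mem_closure hcont hx horbit
  rwa [Metric.isClosed_closedBall.closure_eq, Metric.mem_closedBall, Real.dist_eq] at this

theorem wordCylinder_subset_of_length_le {u v : List A} (huv : u.length ≤ v.length)
    (hne : (wordCylinder u ∩ wordCylinder v).Nonempty) : wordCylinder v ⊆ wordCylinder u := by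
  obtain ⟨y, hyu, hyv⟩ := hne
  intro x hx i hi
  rw [hx i (hi.trans_le huv), ← hyv i (hi.trans_le huv), hyu i hi]

theorem isPiSystem_range_wordCylinder :
    IsPiSystem (range (wordCylinder : List A → Set (ℕ → A))) := by
  rintro _ ⟨u, rfl⟩ _ ⟨v, rfl⟩ hne
  rcases le_total u.length v.length with huv | hvu
  · rw [inter_eq_right.2 (wordCylinder_subset_of_length_le huv hne)]
    exact mem_range_self v
  · rw [inter_eq_left.2 (wordCylinder_subset_of_length_le hvu (inter_comm _ _ ▸ hne))]
    exact mem_range_self u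

end Shift

section Measures

variable {A : Type*} [MeasurableSpace A] [MeasurableSingletonClass A]

theorem measureReal_wordCylinder_eq [TopologicalSpace A] [DiscreteTopology A] {w : ℕ → A}
    {v : List A} {f : ℝ}
    (hf : ∀ ε > (0 : ℝ), ∃ L : ℕ, ∀ ℓ ≥ L, ∀ k : ℕ, |(countOcc w v k ℓ : ℝ) / ℓ - f| < ε)
    {ν : Measure (ℕ → A)} [IsProbabilityMeasure ν]
    (hsupp : ν (closure {x | ∃ k : ℕ, x = fun n => w (n + k)})ᶜ = 0) (hinv : ν.map shiftMap = ν) :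
    ν.real (wordCylinder v) = f := by
  have hT : MeasurePreserving shiftMap ν ν := ⟨measurable_shiftMap, hinv⟩
  have hg : Integrable ((wordCylinder v).indicator (1 : (ℕ → A) → ℝ)) ν :=
    (integrable_const 1).indicator (measurableSet_wordCylinder v)
  refine eq_of_forall_dist_le fun ε hε => ?_
  obtain ⟨ℓ, hℓ, hℓ0⟩ :=
    ((eventually_forall_mem_closure_abs_birkhoffAverage_sub_le hf hε).and
      (eventually_ne_atTop 0)).exists
  rw [← integral_indicator_one (measurableSet_wordCylinder v), ← hT.integral_birkhoffAverage hg hℓ0,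
    Real.dist_eq]
  have hae : ∀ᵐ x ∂ν, ‖birkhoffAverage ℝ shiftMap ((wordCylinder v).indicator 1) ℓ x - f‖ ≤ ε := by
    filter_upwards [mem_ae_iff.2 hsupp] with x hx using hℓ x hx
  have := norm_integral_le_of_norm_le_const hae
  rwa [integral_sub (hT.integrable_birkhoffAverage hg ℓ) (integrable_const f), integral_const,
    probReal_univ, one_smul, mul_one, Real.norm_eq_abs] at this

theorem generateFrom_range_wordCylinder [Countable A] :
    MeasurableSpace.generateFrom (range (wordCylinder : List A → Set (ℕ → A))) =
      MeasurableSpace.pi := by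
  refine le_antisymm (MeasurableSpace.generateFrom_le ?_) ?_
  · rintro _ ⟨v, rfl⟩
    exact measurableSet_wordCylinder v
  · refine iSup_le fun i => Measurable.comap_le
      (@measurable_to_countable' A (ℕ → A) _ _ (.generateFrom (range wordCylinder)) _ fun a => ?_)
    have : (fun x : ℕ → A => x i) ⁻¹' {a} =
        ⋃ v ∈ {v : List A | ∃ h : i < v.length, v[i] = a}, wordCylinder v := by
      ext x
      simp only [mem_preimage, mem_singleton_iff, mem_iUnion, mem_ofPred_eq, exists_prop]
      constructor
      · rintro rfl
        exact ⟨List.ofFn fun j : Fin (i + 1) => x j, ⟨by simp, by simp only [List.getElem_ofFn]⟩,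
          fun j hj => by simp only [List.getElem_ofFn]⟩
      · rintro ⟨v, ⟨hi, rfl⟩, hx⟩
        exact hx i hi
    rw [this]
    exact MeasurableSet.biUnion (to_countable _) fun v _ =>
      MeasurableSpace.measurableSet_generateFrom (mem_range_self v)

theorem ext_of_measureReal_wordCylinder [Countable A] {μ ν : Measure (ℕ → A)}
    [IsProbabilityMeasure μ] [IsProbabilityMeasure ν]
    (h : ∀ v, μ.real (wordCylinder v) = ν.real (wordCylinder v)) : μ = ν := by
  refine ext_of_generate_finite _ generateFrom_range_wordCylinder.symm isPiSystem_range_wordCylinder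
    ?_ (by simp)
  rintro _ ⟨v, rfl⟩
  exact (ENNReal.toReal_eq_toReal_iff' (measure_ne_top _ _) (measure_ne_top _ _)).1 (h v)

end Measures

/-- If a sequence `w` over a finite alphabet has uniform word frequencies, then the
shift on the orbit closure `X_w` of `w` is uniquely ergodic: there is a unique
shift-invariant Borel probability measure concentrated on `X_w`. -/
theorem stmt6 {A : Type*} [Fintype A] [TopologicalSpace A] [DiscreteTopology A]
    [MeasurableSpace A] [MeasurableSingletonClass A]
    (w : ℕ → A) (hfreq : UniformWordFrequencies w) :
    ∃! μ : Measure (ℕ → A), IsProbabilityMeasure μ ∧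
      μ (closure {x | ∃ k : ℕ, x = fun n => w (n + k)})ᶜ = 0 ∧
      μ.map shiftMap = μ := by
  obtain ⟨μ, hμ, hμK, hμT⟩ := exists_isProbabilityMeasure_map_eq_self_of_mapsTo
    continuous_shiftMap isClosed_closure (mapsTo_shiftMap_closure_orbit w) (subset_closure ⟨0, rfl⟩)
  refine ⟨μ, ⟨hμ, hμK, hμT⟩, fun ν ⟨hν, hνK, hνT⟩ => ext_of_measureReal_wordCylinder fun v => ?_⟩
  obtain ⟨f, hf⟩ := hfreq v
  rw [measureReal_wordCylinder_eq hf hνK hνT, measureReal_wordCylinder_eq hf hμK hμT]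
end

section
/- Let M = (M_n) be a primitive and recurrent sequence of nonnegative integer d×d matrices. Then there exists a vector u ∈ ℝ^d_{>0} such that ⋂_{n≥0} M_{[0,n)} ℝ^d_{≥0} = ℝ₊ u, where M_{[0,n)} = M_0 M_1 ⋯ M_{n−1}. -/
/-!
Positive matrices contract Birkhoff's cross ratio: if `x i * y j ≤ c * (x j * y i)` for all
`i j`, then the same holds for `B x, B y` with `c` replaced by `1 + θ (c - 1)`, where
`θ = (κ - 1) / (κ + 1) < 1` and `κ` bounds the ratios `B i k * B j l / (B j k * B i l)`, while
nonnegative matrices never increase `c`. By primitivity some block `B = M_{[0,m)}` is positive,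
and by recurrence it occurs infinitely often in the products `M_{[0,n)}`, so any two vectors of
the intersection of the cones have cross-ratio bound `1`, i.e. are proportional. A positive
vector in the intersection comes from Cantor's intersection theorem applied to the slices of the
cones by the simplex, which are compact whenever `M_{[0,n)}` is positive.
-/

/-- The product `M_0 M_1 ⋯ M_{n-1}` of an initial block of a sequence of matrices. -/
def matBlockProd {d : ℕ} (M : ℕ → Matrix (Fin d) (Fin d) ℝ) (m n : ℕ) :
    Matrix (Fin d) (Fin d) ℝ :=
  (((List.range (n - m)).map fun k => M (m + k))).prod

open Matrix

namespace Matrix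

variable {ι : Type*} [Fintype ι] {A B : Matrix ι ι ℝ} {x : ι → ℝ}

lemma mulVec_nonneg (hA : ∀ i j, 0 ≤ A i j) (hx : 0 ≤ x) : 0 ≤ A *ᵥ x :=
  fun i => Finset.sum_nonneg fun j _ => mul_nonneg (hA i j) (hx j)

lemma mulVec_pos (hA : ∀ i j, 0 < A i j) (hx : 0 ≤ x) (hx0 : x ≠ 0) (i : ι) :
    0 < (A *ᵥ x) i := by
  obtain ⟨j, hj⟩ := Function.ne_iff.mp hx0
  exact Finset.sum_pos' (fun k _ => mul_nonneg (hA i k).le (hx k))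
    ⟨j, Finset.mem_univ j, mul_pos (hA i j) ((hx j).lt_of_ne' hj)⟩

lemma mul_apply_nonneg (hA : ∀ i j, 0 ≤ A i j) (hB : ∀ i j, 0 ≤ B i j) (i j : ι) :
    0 ≤ (A * B) i j :=
  Finset.sum_nonneg fun k _ => mul_nonneg (hA i k) (hB k j)

lemma mul_apply_pos [Nonempty ι] (hA : ∀ i j, 0 < A i j) (hB : ∀ i j, 0 < B i j) (i j : ι) :
    0 < (A * B) i j :=
  Finset.sum_pos (fun k _ => mul_pos (hA i k) (hB k j)) Finset.univ_nonempty

lemma mulVec_apply_mul_mulVec_apply (A : Matrix ι ι ℝ) (x y : ι → ℝ) (i j : ι) :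
    (A *ᵥ x) i * (A *ᵥ y) j = ∑ k, ∑ l, x k * y l * (A i k * A j l) := by
  simp only [mulVec, dotProduct, Finset.sum_mul_sum]
  refine Finset.sum_congr rfl fun k _ => Finset.sum_congr rfl fun l _ => ?_
  ring

end Matrix

section CrossRatio

variable {ι : Type*} [Fintype ι]

-- For positive `x, y` this says that their Hilbert projective distance is at most `log c`.
def CrossRatioLE (c : ℝ) (x y : ι → ℝ) : Prop :=
  ∀ i j, x i * y j ≤ c * (x j * y i)

variable {A B : Matrix ι ι ℝ} {x y : ι → ℝ} {c κ : ℝ}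

lemma CrossRatioLE.mulVec (h : CrossRatioLE c x y) (hA : ∀ i j, 0 ≤ A i j) :
    CrossRatioLE c (A *ᵥ x) (A *ᵥ y) := by
  intro i j
  rw [mulVec_apply_mul_mulVec_apply, mulVec_apply_mul_mulVec_apply, Finset.mul_sum,
    Finset.sum_comm]
  refine Finset.sum_le_sum fun k _ => ?_
  rw [Finset.mul_sum]
  refine Finset.sum_le_sum fun l _ => ?_
  have := mul_le_mul_of_nonneg_right (h l k) (mul_nonneg (hA i l) (hA j k))
  linarith

lemma crossRatioLE_mulVec_of_bound (hB : ∀ i j k l, B i k * B j l ≤ κ * (B j k * B i l))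
    (hx : 0 ≤ x) (hy : 0 ≤ y) : CrossRatioLE κ (B *ᵥ x) (B *ᵥ y) := by
  intro i j
  rw [mulVec_apply_mul_mulVec_apply, mulVec_apply_mul_mulVec_apply, Finset.mul_sum]
  refine Finset.sum_le_sum fun k _ => ?_
  rw [Finset.mul_sum]
  refine Finset.sum_le_sum fun l _ => ?_
  have := mul_le_mul_of_nonneg_left (hB i j k l) (mul_nonneg (hx k) (hy l))
  linarith

-- `(cκ + 1)(uq + vp) - (c + κ)(up + vq) = (cv - u)(κp - q) + (cu - v)(κq - p)`
lemma birkhoff_pair_le {u v p q : ℝ} (huv : u ≤ c * v) (hvu : v ≤ c * u)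
    (hpq : p ≤ κ * q) (hqp : q ≤ κ * p) :
    (c + κ) * (u * p + v * q) ≤ (c * κ + 1) * (u * q + v * p) := by
  nlinarith [mul_nonneg (sub_nonneg.2 huv) (sub_nonneg.2 hqp),
    mul_nonneg (sub_nonneg.2 hvu) (sub_nonneg.2 hpq)]

lemma CrossRatioLE.mulVec_contract (h : CrossRatioLE c x y) (hc : 0 ≤ c) (hκ : 1 ≤ κ)
    (hB0 : ∀ i j, 0 ≤ B i j) (hB : ∀ i j k l, B i k * B j l ≤ κ * (B j k * B i l))
    (hx : 0 ≤ x) (hy : 0 ≤ y) :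
    CrossRatioLE (1 + (κ - 1) / (κ + 1) * (c - 1)) (B *ᵥ x) (B *ᵥ y) := by
  intro i j
  set f : ι → ι → ℝ := fun k l => x k * y l *
    ((c + κ) * (B i k * B j l) - (c * κ + 1) * (B j k * B i l))
  have hexpand : (c + κ) * ((B *ᵥ x) i * (B *ᵥ y) j) -
      (c * κ + 1) * ((B *ᵥ x) j * (B *ᵥ y) i) = ∑ k, ∑ l, f k l := by
    simp only [mulVec_apply_mul_mulVec_apply, Finset.mul_sum, ← Finset.sum_sub_distrib, f]
    exact Finset.sum_congr rfl fun k _ => Finset.sum_congr rfl fun l _ => by ring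
  have hsymm : ∑ k, ∑ l, (f k l + f l k) = 2 * ∑ k, ∑ l, f k l := by
    simp only [Finset.sum_add_distrib, two_mul]
    rw [Finset.sum_comm (f := fun k l => f l k)]
  have hpair : ∑ k, ∑ l, (f k l + f l k) ≤ 0 :=
    Finset.sum_nonpos fun k _ => Finset.sum_nonpos fun l _ => by
      have := birkhoff_pair_le (h k l) (h l k) (hB i j k l) (hB j i k l)
      simp only [f]
      linarith
  have hsum : (c + κ) * ((B *ᵥ x) i * (B *ᵥ y) j) ≤
      (c * κ + 1) * ((B *ᵥ x) j * (B *ᵥ y) i) := by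
    linarith
  have hcoef : c * κ + 1 ≤ (c + κ) * (1 + (κ - 1) / (κ + 1) * (c - 1)) := by
    rw [← sub_nonneg]
    have : (c + κ) * (1 + (κ - 1) / (κ + 1) * (c - 1)) - (c * κ + 1) =
        (κ - 1) * (c - 1) ^ 2 / (κ + 1) := by
      field_simp
      ring
    rw [this]
    have : 0 ≤ κ - 1 := by linarith
    positivity
  have hR : 0 ≤ (B *ᵥ x) j * (B *ᵥ y) i :=
    mul_nonneg (mulVec_nonneg hB0 hx j) (mulVec_nonneg hB0 hy i)
  have hcκ : 0 < c + κ := by linarith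
  refine le_of_mul_le_mul_left ?_ hcκ
  calc (c + κ) * ((B *ᵥ x) i * (B *ᵥ y) j)
      ≤ (c * κ + 1) * ((B *ᵥ x) j * (B *ᵥ y) i) := hsum
    _ ≤ (c + κ) * (1 + (κ - 1) / (κ + 1) * (c - 1)) * ((B *ᵥ x) j * (B *ᵥ y) i) :=
        mul_le_mul_of_nonneg_right hcoef hR
    _ = _ := by ring

end CrossRatio

section BlockProd

variable {d : ℕ} (M : ℕ → Matrix (Fin d) (Fin d) ℝ)

lemma matBlockProd_mul {a b c : ℕ} (hab : a ≤ b) (hbc : b ≤ c) :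
    matBlockProd M a b * matBlockProd M b c = matBlockProd M a c := by
  rw [matBlockProd, matBlockProd, matBlockProd, ← List.prod_append,
    show c - a = (b - a) + (c - b) by omega, List.range_add, List.map_append, List.map_map]
  congr 3
  ext k
  simp only [Function.comp_apply]
  congr 1
  omega

lemma matBlockProd_nonneg (hM : ∀ n i j, 0 ≤ M n i j) (m n : ℕ) (i j : Fin d) :
    0 ≤ matBlockProd M m n i j := by
  refine List.prod_induction (fun A : Matrix (Fin d) (Fin d) ℝ => ∀ i j, 0 ≤ A i j)
    (fun _ _ => mul_apply_nonneg) (fun i j => ?_) ?_ i j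
  · rw [one_apply]; split_ifs <;> norm_num
  · simp only [List.mem_map, List.mem_range]
    rintro _ ⟨k, -, rfl⟩
    exact hM _

lemma matBlockProd_eq_of_occurrence {m p : ℕ} (h : ∀ k < m, M (p + k) = M k) :
    matBlockProd M p (p + m) = matBlockProd M 0 m := by
  simp only [matBlockProd, Nat.add_sub_cancel_left, Nat.sub_zero, zero_add]
  congr 1
  exact List.map_congr_left fun k hk => h k (List.mem_range.mp hk)

variable {M}

lemma exists_occurrence_ge (hrec : ∀ m : ℕ, ∃ n ≥ 1, ∀ k < m, M k = M (n + k))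
    (m N : ℕ) :
    ∃ p ≥ N, ∀ k < m, M (p + k) = M k := by
  induction N with
  | zero => exact ⟨0, le_rfl, fun k _ => by rw [zero_add]⟩
  | succ N ih =>
    obtain ⟨p, hp, hocc⟩ := ih
    obtain ⟨n, hn, h⟩ := hrec (p + m)
    refine ⟨n + p, by omega, fun k hk => ?_⟩
    rw [add_assoc, ← h (p + k) (by omega), hocc k hk]

lemma exists_matBlockProd_pos_ge (hd : 0 < d)
    (hprim : ∀ m : ℕ, ∃ n > m, ∀ i j, 0 < matBlockProd M m n i j) (N : ℕ) :
    ∃ q ≥ N, ∀ i j, 0 < matBlockProd M 0 q i j := by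
  have : NeZero d := ⟨hd.ne'⟩
  induction N with
  | zero =>
    obtain ⟨n, -, h⟩ := hprim 0
    exact ⟨n, n.zero_le, h⟩
  | succ N ih =>
    obtain ⟨q, hq, h⟩ := ih
    obtain ⟨n, hn, h'⟩ := hprim q
    refine ⟨n, by omega, ?_⟩
    rw [← matBlockProd_mul M q.zero_le hn.le]
    exact mul_apply_pos h h'

end BlockProd

section Cone

variable {ι : Type*} [Fintype ι]

lemma sum_mulVec_apply (P : Matrix ι ι ℝ) (a : ι → ℝ) :
    ∑ i, (P *ᵥ a) i = ∑ j, (∑ i, P i j) * a j := by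
  simp only [mulVec, dotProduct, Finset.sum_mul]
  exact Finset.sum_comm

lemma nonneg_of_mem_image_nonneg {P : Matrix ι ι ℝ} (hP : ∀ i j, 0 ≤ P i j) {x : ι → ℝ}
    (hx : x ∈ (P *ᵥ ·) '' {a | ∀ i, 0 ≤ a i}) : 0 ≤ x := by
  obtain ⟨a, ha, rfl⟩ := hx
  exact mulVec_nonneg hP ha

lemma smul_mem_image_nonneg {P : Matrix ι ι ℝ} {x : ι → ℝ} {t : ℝ} (ht : 0 ≤ t)
    (hx : x ∈ (P *ᵥ ·) '' {a | ∀ i, 0 ≤ a i}) :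
    t • x ∈ (P *ᵥ ·) '' {a | ∀ i, 0 ≤ a i} := by
  obtain ⟨a, ha, rfl⟩ := hx
  exact ⟨t • a, fun i => mul_nonneg ht (ha i), mulVec_smul P t a⟩

lemma image_nonneg_mul_subset (A : Matrix ι ι ℝ) {B : Matrix ι ι ℝ}
    (hB : ∀ i j, 0 ≤ B i j) :
    ((A * B) *ᵥ ·) '' {a | ∀ i, 0 ≤ a i} ⊆ (A *ᵥ ·) '' {a | ∀ i, 0 ≤ a i} := by
  rintro _ ⟨a, ha, rfl⟩
  exact ⟨B *ᵥ a, mulVec_nonneg hB ha, mulVec_mulVec a A B⟩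

lemma image_nonneg_inter_stdSimplex {P : Matrix ι ι ℝ} (hP : ∀ i j, 0 < P i j) :
    (P *ᵥ ·) '' {a | ∀ i, 0 ≤ a i} ∩ stdSimplex ℝ ι =
      (fun b => P *ᵥ fun j => b j / ∑ i, P i j) '' stdSimplex ℝ ι := by
  have hσ : ∀ j, 0 < ∑ i, P i j := fun j =>
    Finset.sum_pos (fun i _ => hP i j) ⟨j, Finset.mem_univ j⟩
  ext x
  constructor
  · rintro ⟨⟨a, ha, rfl⟩, -, hsum⟩
    refine ⟨fun j => a j * ∑ i, P i j, ⟨fun j => mul_nonneg (ha j) (hσ j).le, ?_⟩, ?_⟩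
    · rw [← hsum, sum_mulVec_apply]
      exact Finset.sum_congr rfl fun j _ => mul_comm _ _
    · simp only [mul_div_cancel_right₀ _ (hσ _).ne']
  · rintro ⟨b, ⟨hb, hbsum⟩, rfl⟩
    refine ⟨⟨_, fun j => div_nonneg (hb j) (hσ j).le, rfl⟩,
      mulVec_nonneg (fun i j => (hP i j).le) (fun j => div_nonneg (hb j) (hσ j).le), ?_⟩
    rw [sum_mulVec_apply, ← hbsum]
    exact Finset.sum_congr rfl fun j _ => mul_div_cancel₀ _ (hσ j).ne'

lemma isCompact_image_nonneg_inter_stdSimplex {P : Matrix ι ι ℝ} (hP : ∀ i j, 0 < P i j) :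
    IsCompact ((P *ᵥ ·) '' {a | ∀ i, 0 ≤ a i} ∩ stdSimplex ℝ ι) := by
  rw [image_nonneg_inter_stdSimplex hP]
  exact (isCompact_stdSimplex ℝ ι).image (by fun_prop)

lemma exists_crossRatio_bound {B : Matrix ι ι ℝ} (hB : ∀ i j, 0 < B i j) :
    ∃ κ, 1 ≤ κ ∧ ∀ i j k l, B i k * B j l ≤ κ * (B j k * B i l) := by
  obtain ⟨K, hK⟩ := Finite.bddAbove_range fun q : ι × ι × ι × ι =>
    B q.1 q.2.2.1 * B q.2.1 q.2.2.2 / (B q.2.1 q.2.2.1 * B q.1 q.2.2.2)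
  refine ⟨max K 1, le_max_right K 1, fun i j k l => ?_⟩
  have hq := hK ⟨(i, j, k, l), rfl⟩
  rw [div_le_iff₀ (mul_pos (hB j k) (hB i l))] at hq
  exact hq.trans (mul_le_mul_of_nonneg_right (le_max_left K 1) (mul_pos (hB j k) (hB i l)).le)

lemma eq_smul_of_crossRatioLE_one {u x : ι → ℝ} (hu : ∀ i, 0 < u i) (hx : 0 ≤ x)
    (h : CrossRatioLE 1 x u) : ∃ t : ℝ, 0 ≤ t ∧ x = t • u := by
  refine ⟨(∑ j, x j) / ∑ j, u j, div_nonneg (Finset.sum_nonneg fun j _ => hx j)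
    (Finset.sum_nonneg fun j _ => (hu j).le), funext fun i => ?_⟩
  have hsum : 0 < ∑ j, u j := Finset.sum_pos (fun j _ => hu j) ⟨i, Finset.mem_univ i⟩
  have hle : x i * ∑ j, u j ≤ (∑ j, x j) * u i := by
    simpa only [Finset.mul_sum, Finset.sum_mul, one_mul] using
      Finset.sum_le_sum fun j (_ : j ∈ Finset.univ) => h i j
  have hge : (∑ j, x j) * u i ≤ x i * ∑ j, u j := by
    simpa only [Finset.mul_sum, Finset.sum_mul, one_mul] using
      Finset.sum_le_sum fun j (_ : j ∈ Finset.univ) => h j i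
  rw [Pi.smul_apply, smul_eq_mul, div_mul_eq_mul_div, eq_div_iff hsum.ne']
  linarith

end Cone

section Sequence

variable {d : ℕ} {M : ℕ → Matrix (Fin d) (Fin d) ℝ}

lemma image_matBlockProd_antitone (hM : ∀ n i j, 0 ≤ M n i j) {n n' : ℕ} (h : n ≤ n') :
    (matBlockProd M 0 n' *ᵥ ·) '' {a | ∀ i, 0 ≤ a i} ⊆
      (matBlockProd M 0 n *ᵥ ·) '' {a | ∀ i, 0 ≤ a i} := by
  rw [← matBlockProd_mul M n.zero_le h]
  exact image_nonneg_mul_subset _ (matBlockProd_nonneg M hM n n')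

lemma exists_pos_mem_iInter_image_matBlockProd (hM : ∀ n i j, 0 ≤ M n i j)
    (hprim : ∀ m : ℕ, ∃ n > m, ∀ i j, 0 < matBlockProd M m n i j) :
    ∃ u : Fin d → ℝ, (∀ i, 0 < u i) ∧
      ∀ n, u ∈ (matBlockProd M 0 n *ᵥ ·) '' {a | ∀ i, 0 ≤ a i} := by
  rcases isEmpty_or_nonempty (Fin d) with hι | hι
  · exact ⟨0, isEmptyElim, fun n => ⟨0, fun _ => le_rfl, mulVec_zero _⟩⟩
  have hd : 0 < d := Fin.pos_iff_nonempty.mpr hι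
  let S : {q // ∀ i j, 0 < matBlockProd M 0 q i j} → Set (Fin d → ℝ) := fun q =>
    (matBlockProd M 0 q *ᵥ ·) '' {a | ∀ i, 0 ≤ a i} ∩ stdSimplex ℝ (Fin d)
  obtain ⟨q₀, -, hq₀⟩ := exists_matBlockProd_pos_ge hd hprim 0
  have : Nonempty {q // ∀ i j, 0 < matBlockProd M 0 q i j} := ⟨⟨q₀, hq₀⟩⟩
  obtain ⟨u, hu⟩ := IsCompact.nonempty_iInter_of_directed_nonempty_isCompact_isClosed S
    (Antitone.directed_ge fun q q' h => Set.inter_subset_inter_left _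
      (image_matBlockProd_antitone hM h))
    (fun q => by
      simp only [S, image_nonneg_inter_stdSimplex q.2]
      exact ⟨_, _, single_mem_stdSimplex ℝ (Classical.arbitrary _), rfl⟩)
    (fun q => isCompact_image_nonneg_inter_stdSimplex q.2)
    (fun q => (isCompact_image_nonneg_inter_stdSimplex q.2).isClosed)
  rw [Set.mem_iInter] at hu
  refine ⟨u, fun i => ?_, fun n => ?_⟩
  · obtain ⟨⟨a, ha, rfl⟩, -, hsum⟩ := hu ⟨q₀, hq₀⟩
    refine mulVec_pos hq₀ ha (fun ha0 => ?_) i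
    simp [ha0] at hsum
  · obtain ⟨q, hq, hqpos⟩ := exists_matBlockProd_pos_ge hd hprim n
    exact image_matBlockProd_antitone hM hq (hu ⟨q, hqpos⟩).1

lemma exists_crossRatioLE_matBlockProd (hM : ∀ n i j, 0 ≤ M n i j) {m : ℕ} {κ : ℝ}
    (hκ : 1 ≤ κ) (hB : ∀ i j k l, matBlockProd M 0 m i k * matBlockProd M 0 m j l ≤
      κ * (matBlockProd M 0 m j k * matBlockProd M 0 m i l))
    (hocc : ∀ N, ∃ p ≥ N, ∀ k < m, M (p + k) = M k) (k s : ℕ) :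
    ∃ n ≥ s, ∀ a b : Fin d → ℝ, 0 ≤ a → 0 ≤ b →
      CrossRatioLE (1 + ((κ - 1) / (κ + 1)) ^ k * (κ - 1))
        (matBlockProd M s n *ᵥ a) (matBlockProd M s n *ᵥ b) := by
  have hsplit : ∀ s, ∃ p ≥ s,
      matBlockProd M s (p + m) = matBlockProd M s p * matBlockProd M 0 m := fun s => by
    obtain ⟨p, hp, hpocc⟩ := hocc s
    exact ⟨p, hp, by rw [← matBlockProd_eq_of_occurrence M hpocc,
      matBlockProd_mul M hp (p.le_add_right m)]⟩
  induction k generalizing s with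
  | zero =>
    obtain ⟨p, hp, hp_split⟩ := hsplit s
    refine ⟨p + m, by omega, fun a b ha hb => ?_⟩
    rw [hp_split, ← mulVec_mulVec, ← mulVec_mulVec, pow_zero, one_mul, add_sub_cancel]
    exact (crossRatioLE_mulVec_of_bound hB ha hb).mulVec (matBlockProd_nonneg M hM s p)
  | succ k ih =>
    obtain ⟨p, hp, hp_split⟩ := hsplit s
    obtain ⟨n, hn, hcr⟩ := ih (p + m)
    refine ⟨n, by omega, fun a b ha hb => ?_⟩
    have hc : 0 ≤ 1 + ((κ - 1) / (κ + 1)) ^ k * (κ - 1) := by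
      have : 0 ≤ κ - 1 := by linarith
      positivity
    have hcontract := (hcr a b ha hb).mulVec_contract hc hκ (matBlockProd_nonneg M hM 0 m) hB
      (mulVec_nonneg (matBlockProd_nonneg M hM _ _) ha)
      (mulVec_nonneg (matBlockProd_nonneg M hM _ _) hb)
    rw [← matBlockProd_mul M (hp.trans (p.le_add_right m)) hn, hp_split, mul_assoc,
      ← mulVec_mulVec, ← mulVec_mulVec, ← mulVec_mulVec, ← mulVec_mulVec]
    convert hcontract.mulVec (matBlockProd_nonneg M hM s p) using 1
    ring

lemma crossRatioLE_one_of_mem_iInter (hM : ∀ n i j, 0 ≤ M n i j) {m : ℕ}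
    (hB : ∀ i j, 0 < matBlockProd M 0 m i j)
    (hrec : ∀ m : ℕ, ∃ n ≥ 1, ∀ k < m, M k = M (n + k)) {x y : Fin d → ℝ}
    (hx : ∀ n, x ∈ (matBlockProd M 0 n *ᵥ ·) '' {a | ∀ i, 0 ≤ a i})
    (hy : ∀ n, y ∈ (matBlockProd M 0 n *ᵥ ·) '' {a | ∀ i, 0 ≤ a i}) :
    CrossRatioLE 1 x y := by
  obtain ⟨κ, hκ, hBκ⟩ := exists_crossRatio_bound hB
  have hθ : Filter.Tendsto (fun k => 1 + ((κ - 1) / (κ + 1)) ^ k * (κ - 1)) Filter.atTop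
      (nhds (1 + 0 * (κ - 1))) :=
    ((tendsto_pow_atTop_nhds_zero_of_lt_one (div_nonneg (by linarith) (by linarith))
      ((div_lt_one (by linarith)).mpr (by linarith))).mul_const _).const_add 1
  rw [zero_mul, add_zero] at hθ
  intro i j
  refine ge_of_tendsto' (hθ.mul_const (x j * y i)) fun k => ?_
  obtain ⟨n, -, hcr⟩ := exists_crossRatioLE_matBlockProd hM hκ hBκ
    (exists_occurrence_ge hrec m) k 0
  obtain ⟨a, ha, rfl⟩ := hx n
  obtain ⟨b, hb, rfl⟩ := hy n
  exact hcr a b ha hb i j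

end Sequence

/-- A primitive and recurrent sequence of nonnegative integer matrices admits a
strictly positive generalized right eigenvector `u`:
`⋂_{n ≥ 0} M_{[0,n)} ℝ^d_{≥0} = ℝ₊ u`. -/
theorem stmt7 {d : ℕ} (M : ℕ → Matrix (Fin d) (Fin d) ℝ)
    -- nonnegative integer entries
    (hint : ∀ n i j, ∃ m : ℕ, M n i j = (m : ℝ))
    -- primitivity
    (hprim : ∀ m : ℕ, ∃ n > m, ∀ i j, 0 < matBlockProd M m n i j)
    -- recurrence
    (hrec : ∀ m : ℕ, ∃ n ≥ 1, ∀ k < m, M k = M (n + k)) :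
    ∃ u : Fin d → ℝ, (∀ i, 0 < u i) ∧
      (⋂ n : ℕ, (fun x => (matBlockProd M 0 n).mulVec x) '' {x : Fin d → ℝ | ∀ i, 0 ≤ x i})
        = {x : Fin d → ℝ | ∃ t : ℝ, 0 ≤ t ∧ x = t • u} := by
  have hM : ∀ n i j, 0 ≤ M n i j := fun n i j => by
    obtain ⟨k, hk⟩ := hint n i j
    exact hk ▸ k.cast_nonneg
  obtain ⟨u, hu, hu_mem⟩ := exists_pos_mem_iInter_image_matBlockProd hM hprim
  obtain ⟨m, -, hB⟩ := hprim 0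
  refine ⟨u, hu, Set.Subset.antisymm (fun x hx => ?_) ?_⟩
  · rw [Set.mem_iInter] at hx
    exact eq_smul_of_crossRatioLE_one hu
      (nonneg_of_mem_image_nonneg (matBlockProd_nonneg M hM 0 0) (hx 0))
      (crossRatioLE_one_of_mem_iInter hM hB hrec hx hu_mem)
  · rintro _ ⟨t, ht, rfl⟩
    exact Set.mem_iInter.mpr fun n => smul_mem_image_nonneg ht (hu_mem n)
end

section
/- On the space W of rays through the origin in the open positive cone of ℝ^d, the Hilbert metric d_W(ℝ₊v, ℝ₊w) = max_{1≤i,j≤d} log(v_i w_j / (v_j w_i)) is a metric, every nonnegative invertible matrix M with Mℝ^d_{>0} ⊆ ℝ^d_{>0} is nonexpanding for d_W, and every strictly positive matrix M is a strict contraction for d_W: there exists κ < 1 (depending on M) with d_W(Mℝ₊v, Mℝ₊w) ≤ κ·d_W(ℝ₊v, ℝ₊w) for all rays. -/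
/-- The Hilbert metric on rays in the positive cone, expressed on representative
vectors: `d(ℝ₊v, ℝ₊w) = max_{i,j} log (vᵢ wⱼ / (vⱼ wᵢ))`. -/
noncomputable def hilbD {d : ℕ} (v w : Fin d → ℝ) : ℝ :=
  ⨆ p : Fin d × Fin d, Real.log (v p.1 * w p.2 / (v p.2 * w p.1))

/-!
Each term of the supremum is `xᵢ - xⱼ` for `x = log v - log w`, which gives the triangle
inequality. The distance is also `log (b / a)` for the optimal cone bounds
`a • w ≤ v ≤ b • w`; a nonnegative matrix preserves such bounds, hence does not expand.
For a positive matrix the rows are comparable, `δ (M u)ᵢ ≤ (M u)ⱼ` for `u ≥ 0`; applied to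
`u = v - a • w` and `u = b • w - v` this gives Birkhoff's bound `(b + δ²a) / (a + δ²b)` for the
new ratio, and `log ((x + ε) / (1 + ε x)) ≤ (1 - ε) / (1 + ε) · log x` for `x ≥ 1` turns it into
a contraction with `κ = (1 - δ²) / (1 + δ²)`.
-/

open Real Set Matrix

lemma log_add_div_one_add_mul_le {ε x : ℝ} (hε0 : 0 ≤ ε) (hε1 : ε ≤ 1) (hx : 1 ≤ x) :
    log ((x + ε) / (1 + ε * x)) ≤ (1 - ε) / (1 + ε) * log x := by
  set κ := (1 - ε) / (1 + ε)
  let g : ℝ → ℝ := fun t => κ * log t - log (t + ε) + log (1 + ε * t)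
  let g' : ℝ → ℝ := fun t => κ / t - 1 / (t + ε) + ε / (1 + ε * t)
  have hg : ∀ t, 0 < t → HasDerivAt g (g' t) t := fun t ht => by
    have h1 := (hasDerivAt_log ht.ne').const_mul κ
    have h2 := ((hasDerivAt_id t).add_const ε).log (by positivity)
    have h3 := (((hasDerivAt_id t).const_mul ε).const_add 1).log (by positivity)
    exact ((h1.sub h2).add h3).congr_deriv (by simp [g', div_eq_mul_inv])
  have hg'_nonneg : ∀ t, 1 < t → 0 ≤ g' t := fun t ht => by
    have ht0 : 0 < t := by linarith
    have : g' t = ε * (1 - ε) * (t - 1) ^ 2 / ((1 + ε) * t * (t + ε) * (1 + ε * t)) := by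
      simp only [g', κ]; field_simp; ring
    rw [this]
    have : 0 ≤ 1 - ε := by linarith
    positivity
  have hmono : MonotoneOn g (Ici 1) := by
    refine monotoneOn_of_hasDerivWithinAt_nonneg (convex_Ici 1)
      (fun t ht => (hg t (by linarith [mem_Ici.mp ht])).continuousAt.continuousWithinAt)
      (fun t ht => (hg t ?_).hasDerivWithinAt) (fun t ht => hg'_nonneg t ?_)
    all_goals rw [interior_Ici, mem_Ioi] at ht; linarith
  have := hmono self_mem_Ici hx hx
  simp only [g, log_one, mul_zero, mul_one] at this
  rw [log_div (by positivity) (by positivity)]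
  linarith

lemma log_add_mul_div_add_mul_le {a b ε : ℝ} (ha : 0 < a) (hab : a ≤ b) (hε0 : 0 ≤ ε)
    (hε1 : ε ≤ 1) :
    log ((b + ε * a) / (a + ε * b)) ≤ (1 - ε) / (1 + ε) * log (b / a) := by
  have : (b + ε * a) / (a + ε * b) = (b / a + ε) / (1 + ε * (b / a)) := by
    field_simp
  rw [this]
  exact log_add_div_one_add_mul_le hε0 hε1 ((one_le_div ha).mpr hab)

/-- Birkhoff's estimate for two rows `i`, `j`: with `A = M v`, `B = M w`, the hypotheses are the
comparability of the rows of `M` applied to the nonnegative vectors `v - a w` and `b w - v`. -/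
lemma mul_mul_add_le_of_ratio_bounds {a b ε Ai Aj Bi Bj : ℝ} (ha : 0 ≤ a) (hb : 0 ≤ b)
    (hP : ε * ((Ai - a * Bi) * Bj) ≤ (Aj - a * Bj) * Bi)
    (hQ : ε * ((b * Bj - Aj) * Bi) ≤ (b * Bi - Ai) * Bj) :
    Ai * Bj * (a + ε * b) ≤ (b + ε * a) * (Aj * Bi) := by
  linear_combination b * hP + a * hQ

section MatrixOrder

variable {m n R : Type*} [Fintype n] [Semiring R] [PartialOrder R] [IsOrderedRing R]

lemma Matrix.mulVec_mono_of_nonneg {M : Matrix m n R} (hM : ∀ i j, 0 ≤ M i j) {u u' : n → R}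
    (h : u ≤ u') : M *ᵥ u ≤ M *ᵥ u' :=
  fun i => dotProduct_le_dotProduct_of_nonneg_left h (hM i)

lemma Matrix.mulVec_nonneg_of_nonneg {M : Matrix m n R} (hM : ∀ i j, 0 ≤ M i j) {u : n → R}
    (hu : 0 ≤ u) : 0 ≤ M *ᵥ u := by
  simpa using mulVec_mono_of_nonneg hM hu

lemma Matrix.mul_mulVec_le_mulVec {M : Matrix m n R} {δ : R} (hδ : ∀ i j k, δ * M j k ≤ M i k)
    {u : n → R} (hu : 0 ≤ u) (i j : m) : δ * (M *ᵥ u) j ≤ (M *ᵥ u) i := by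
  simp only [mulVec, dotProduct, Finset.mul_sum, ← mul_assoc]
  gcongr with k
  · exact hu k
  · exact hδ i j k

end MatrixOrder

lemma Matrix.mulVec_pos_s8 {ι : Type*} [Fintype ι] [Nonempty ι] {M : Matrix ι ι ℝ}
    (hM : ∀ i j, 0 < M i j) {v : ι → ℝ} (hv : ∀ i, 0 < v i) (i : ι) : 0 < (M *ᵥ v) i :=
  Finset.sum_pos (fun k _ => mul_pos (hM i k) (hv k)) Finset.univ_nonempty

lemma Matrix.exists_mul_le_of_pos {ι : Type*} [Finite ι] [Nonempty ι] {M : Matrix ι ι ℝ}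
    (hM : ∀ i j, 0 < M i j) : ∃ δ, 0 < δ ∧ δ ≤ 1 ∧ ∀ i j k, δ * M j k ≤ M i k := by
  obtain ⟨q, hq⟩ := Finite.exists_min fun q : ι × ι × ι => M q.1 q.2.2 / M q.2.1 q.2.2
  refine ⟨M q.1 q.2.2 / M q.2.1 q.2.2, div_pos (hM _ _) (hM _ _), ?_, fun i j k => ?_⟩
  · obtain ⟨k⟩ := ‹Nonempty ι›
    simpa [div_self (hM k k).ne'] using hq (k, k, k)
  · exact (le_div_iff₀ (hM j k)).mp (hq (i, j, k))

lemma Matrix.mulVec_ratio_le {ι : Type*} [Fintype ι] {M : Matrix ι ι ℝ}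
    (hM : ∀ i j, 0 ≤ M i j) {δ : ℝ} (hδ0 : 0 ≤ δ) (hδ : ∀ i j k, δ * M j k ≤ M i k)
    {v w : ι → ℝ} (hMv : ∀ i, 0 < (M *ᵥ v) i) (hMw : ∀ i, 0 < (M *ᵥ w) i) {a b : ℝ}
    (ha : 0 < a) (hb : 0 ≤ b) (hw : 0 ≤ w) (hav : a • w ≤ v) (hvb : v ≤ b • w) (i j : ι) :
    (M *ᵥ v) i * (M *ᵥ w) j / ((M *ᵥ v) j * (M *ᵥ w) i)
      ≤ (b + δ ^ 2 * a) / (a + δ ^ 2 * b) := by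
  have hbal : ∀ u : ι → ℝ, 0 ≤ u → ∀ i j, δ ^ 2 * ((M *ᵥ u) i * (M *ᵥ w) j)
      ≤ (M *ᵥ u) j * (M *ᵥ w) i := fun u hu i j =>
    calc δ ^ 2 * ((M *ᵥ u) i * (M *ᵥ w) j) = (δ * (M *ᵥ u) i) * (δ * (M *ᵥ w) j) := by ring
      _ ≤ (M *ᵥ u) j * (M *ᵥ w) i :=
        mul_le_mul (mul_mulVec_le_mulVec hδ hu j i) (mul_mulVec_le_mulVec hδ hw i j)
          (mul_nonneg hδ0 (hMw j).le) (mulVec_nonneg_of_nonneg hM hu j)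
  have hP := hbal (v - a • w) (sub_nonneg.mpr hav) i j
  have hQ := hbal (b • w - v) (sub_nonneg.mpr hvb) j i
  simp only [mulVec_sub, mulVec_smul, Pi.sub_apply, Pi.smul_apply, smul_eq_mul] at hP hQ
  rw [div_le_div_iff₀ (mul_pos (hMv j) (hMw i)) (by positivity)]
  exact mul_mul_add_le_of_ratio_bounds ha.le hb hP hQ

section HilbertMetric

variable {d : ℕ}

lemma log_le_hilbD (v w : Fin d → ℝ) (i j : Fin d) :
    log (v i * w j / (v j * w i)) ≤ hilbD v w :=
  le_ciSup (f := fun p : Fin d × Fin d => log (v p.1 * w p.2 / (v p.2 * w p.1)))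
    (finite_range _).bddAbove (i, j)

lemma hilbD_le [NeZero d] {v w : Fin d → ℝ} {c : ℝ}
    (h : ∀ i j, log (v i * w j / (v j * w i)) ≤ c) : hilbD v w ≤ c :=
  ciSup_le fun p => h p.1 p.2

lemma hilbD_comm (v w : Fin d → ℝ) : hilbD v w = hilbD w v := by
  rw [hilbD, ← (Equiv.prodComm _ _).iSup_comp, hilbD]
  simp [mul_comm]

lemma hilbD_nonneg [NeZero d] {v w : Fin d → ℝ} (hv : ∀ i, 0 < v i) (hw : ∀ i, 0 < w i) :
    0 ≤ hilbD v w := by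
  simpa [div_self (mul_pos (hv 0) (hw 0)).ne'] using log_le_hilbD v w 0 0

lemma log_mul_div_mul_eq {v w : Fin d → ℝ} (hv : ∀ i, 0 < v i) (hw : ∀ i, 0 < w i)
    (i j : Fin d) : log (v i * w j / (v j * w i))
      = (log (v i) - log (w i)) - (log (v j) - log (w j)) := by
  rw [log_div (mul_pos (hv i) (hw j)).ne' (mul_pos (hv j) (hw i)).ne',
    log_mul (hv i).ne' (hw j).ne', log_mul (hv j).ne' (hw i).ne']
  ring

lemma hilbD_triangle [NeZero d] {v w z : Fin d → ℝ} (hv : ∀ i, 0 < v i) (hw : ∀ i, 0 < w i)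
    (hz : ∀ i, 0 < z i) : hilbD v z ≤ hilbD v w + hilbD w z := by
  refine hilbD_le fun i j => ?_
  have hvw := log_le_hilbD v w i j
  have hwz := log_le_hilbD w z i j
  rw [log_mul_div_mul_eq hv hw] at hvw
  rw [log_mul_div_mul_eq hw hz] at hwz
  rw [log_mul_div_mul_eq hv hz]
  linarith

lemma hilbD_le_log_div [NeZero d] {v w : Fin d → ℝ} (hw : ∀ i, 0 < w i) {a b : ℝ} (ha : 0 < a)
    (hav : a • w ≤ v) (hvb : v ≤ b • w) : hilbD v w ≤ log (b / a) := by
  have hav' i : a * w i ≤ v i := hav i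
  have hvb' i : v i ≤ b * w i := hvb i
  have hv i : 0 < v i := (mul_pos ha (hw i)).trans_le (hav' i)
  refine hilbD_le fun i j =>
    log_le_log (div_pos (mul_pos (hv i) (hw j)) (mul_pos (hv j) (hw i))) ?_
  rw [div_le_div_iff₀ (mul_pos (hv j) (hw i)) ha]
  calc v i * w j * a = v i * (a * w j) := by ring
    _ ≤ b * w i * v j :=
        mul_le_mul (hvb' i) (hav' j) (mul_pos ha (hw j)).le ((hv i).le.trans (hvb' i))
    _ = b * (v j * w i) := by ring

lemma exists_smul_le_le_smul [NeZero d] {v w : Fin d → ℝ} (hv : ∀ i, 0 < v i)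
    (hw : ∀ i, 0 < w i) : ∃ a b : ℝ, 0 < a ∧ a ≤ b ∧ a • w ≤ v ∧ v ≤ b • w ∧
      log (b / a) ≤ hilbD v w := by
  obtain ⟨kmax, hmax⟩ := Finite.exists_max fun k => v k / w k
  obtain ⟨kmin, hmin⟩ := Finite.exists_min fun k => v k / w k
  refine ⟨v kmin / w kmin, v kmax / w kmax, div_pos (hv _) (hw _), hmin kmax,
    fun i => (le_div_iff₀ (hw i)).mp (hmin i), fun i => (div_le_iff₀ (hw i)).mp (hmax i), ?_⟩
  convert log_le_hilbD v w kmax kmin using 2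
  field_simp

lemma hilbD_eq_zero_iff [NeZero d] {v w : Fin d → ℝ} (hv : ∀ i, 0 < v i) (hw : ∀ i, 0 < w i) :
    hilbD v w = 0 ↔ ∃ t : ℝ, 0 < t ∧ w = t • v := by
  constructor
  · intro h0
    obtain ⟨a, b, ha, hab, hav, hvb, hlog⟩ := exists_smul_le_le_smul hv hw
    have hba : b ≤ a := by
      rw [h0, log_nonpos_iff (div_nonneg (ha.le.trans hab) ha.le), div_le_one ha] at hlog
      exact hlog
    have hva : v = a • w :=
      le_antisymm (hvb.trans (smul_le_smul_of_nonneg_right hba fun i => (hw i).le)) hav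
    exact ⟨a⁻¹, inv_pos.mpr ha, by rw [hva, smul_smul, inv_mul_cancel₀ ha.ne', one_smul]⟩
  · rintro ⟨t, ht, rfl⟩
    refine le_antisymm (hilbD_le fun i j => ?_) (hilbD_nonneg hv fun i => mul_pos ht (hv i))
    have : v i * (t • v) j / (v j * (t • v) i) = 1 := by
      simp only [Pi.smul_apply, smul_eq_mul]
      field_simp [(hv i).ne', (hv j).ne', ht.ne']
    rw [this, log_one]

theorem hilbD_mulVec_le [NeZero d] {M : Matrix (Fin d) (Fin d) ℝ} (hM : ∀ i j, 0 ≤ M i j)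
    (hcone : ∀ x : Fin d → ℝ, (∀ i, 0 < x i) → ∀ i, 0 < (M *ᵥ x) i)
    {v w : Fin d → ℝ} (hv : ∀ i, 0 < v i) (hw : ∀ i, 0 < w i) :
    hilbD (M *ᵥ v) (M *ᵥ w) ≤ hilbD v w := by
  obtain ⟨a, b, ha, -, hav, hvb, hlog⟩ := exists_smul_le_le_smul hv hw
  refine (hilbD_le_log_div (hcone w hw) ha ?_ ?_).trans hlog
  · simpa [mulVec_smul] using mulVec_mono_of_nonneg hM hav
  · simpa [mulVec_smul] using mulVec_mono_of_nonneg hM hvb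

theorem exists_hilbD_mulVec_le_mul [NeZero d] {M : Matrix (Fin d) (Fin d) ℝ}
    (hM : ∀ i j, 0 < M i j) : ∃ κ : ℝ, 0 ≤ κ ∧ κ < 1 ∧ ∀ v w : Fin d → ℝ,
      (∀ i, 0 < v i) → (∀ i, 0 < w i) → hilbD (M *ᵥ v) (M *ᵥ w) ≤ κ * hilbD v w := by
  obtain ⟨δ, hδ0, hδ1, hδ⟩ := exists_mul_le_of_pos hM
  have hδ2 : δ ^ 2 ≤ 1 := pow_le_one₀ hδ0.le hδ1
  have hκ : 0 ≤ (1 - δ ^ 2) / (1 + δ ^ 2) := div_nonneg (by linarith) (by positivity)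
  refine ⟨_, hκ, (div_lt_one (by positivity)).mpr (by linarith [pow_pos hδ0 2]),
    fun v w hv hw => ?_⟩
  obtain ⟨a, b, ha, hab, hav, hvb, hlog⟩ := exists_smul_le_le_smul hv hw
  have hMv := mulVec_pos_s8 hM hv
  have hMw := mulVec_pos_s8 hM hw
  calc hilbD (M *ᵥ v) (M *ᵥ w) ≤ log ((b + δ ^ 2 * a) / (a + δ ^ 2 * b)) :=
        hilbD_le fun i j =>
          log_le_log (div_pos (mul_pos (hMv i) (hMw j)) (mul_pos (hMv j) (hMw i)))
          (mulVec_ratio_le (fun i j => (hM i j).le) hδ0.le hδ hMv hMw ha (ha.le.trans hab)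
            (fun i => (hw i).le) hav hvb i j)
    _ ≤ (1 - δ ^ 2) / (1 + δ ^ 2) * log (b / a) :=
        log_add_mul_div_add_mul_le ha hab (sq_nonneg δ) hδ2
    _ ≤ (1 - δ ^ 2) / (1 + δ ^ 2) * hilbD v w := mul_le_mul_of_nonneg_left hlog hκ

end HilbertMetric

/-- The Hilbert metric is a metric on the space of rays through the origin in the open
positive cone of `ℝ^d`; nonnegative matrices preserving the open cone are nonexpanding
for it, and strictly positive matrices are strict contractions. -/
theorem stmt8 {d : ℕ} [NeZero d] :
    -- symmetry
    (∀ v w : Fin d → ℝ, (∀ i, 0 < v i) → (∀ i, 0 < w i) → hilbD v w = hilbD w v) ∧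
    -- nonnegativity
    (∀ v w : Fin d → ℝ, (∀ i, 0 < v i) → (∀ i, 0 < w i) → 0 ≤ hilbD v w) ∧
    -- vanishing exactly on equal rays
    (∀ v w : Fin d → ℝ, (∀ i, 0 < v i) → (∀ i, 0 < w i) →
      (hilbD v w = 0 ↔ ∃ t : ℝ, 0 < t ∧ w = t • v)) ∧
    -- triangle inequality
    (∀ v w z : Fin d → ℝ, (∀ i, 0 < v i) → (∀ i, 0 < w i) → (∀ i, 0 < z i) →
      hilbD v z ≤ hilbD v w + hilbD w z) ∧
    -- nonnegative invertible matrices mapping the open cone into itself are nonexpanding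
    (∀ M : Matrix (Fin d) (Fin d) ℝ, (∀ i j, 0 ≤ M i j) → M.det ≠ 0 →
      (∀ x : Fin d → ℝ, (∀ i, 0 < x i) → ∀ i, 0 < M.mulVec x i) →
      ∀ v w : Fin d → ℝ, (∀ i, 0 < v i) → (∀ i, 0 < w i) →
        hilbD (M.mulVec v) (M.mulVec w) ≤ hilbD v w) ∧
    -- strictly positive matrices are strict contractions
    (∀ M : Matrix (Fin d) (Fin d) ℝ, (∀ i j, 0 < M i j) →
      ∃ κ : ℝ, 0 ≤ κ ∧ κ < 1 ∧
        ∀ v w : Fin d → ℝ, (∀ i, 0 < v i) → (∀ i, 0 < w i) →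
          hilbD (M.mulVec v) (M.mulVec w) ≤ κ * hilbD v w) :=
  ⟨fun v w _ _ => hilbD_comm v w,
    fun _ _ hv hw => hilbD_nonneg hv hw,
    fun _ _ hv hw => hilbD_eq_zero_iff hv hw,
    fun _ _ _ hv hw hz => hilbD_triangle hv hw hz,
    fun _ hM _ hcone _ _ hv hw => hilbD_mulVec_le hM hcone hv hw,
    fun _ hM => exists_hilbD_mulVec_le_mul hM⟩
end

section
/- Let w ∈ {1,2,3}^ℕ be a sequence which is a natural coding of a minimal rotation on the 2-torus with bounded fundamental domain. Then w is C-balanced for some C ≥ 1. Consequently, an Arnoux-Rauzy sequence which is not finitely balanced is not a natural coding of a minimal translation on 𝕋² with bounded fundamental domain. -/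
/-- The word `v` occurs in the sequence `w` at position `k`. -/
def occursAt3 (w : ℕ → Fin 3) (v : List (Fin 3)) (k : ℕ) : Prop :=
  ∀ i < v.length, v.getD i 0 = w (k + i)

/-- `v` is a factor of `w`. -/
def IsFactor3 (w : ℕ → Fin 3) (v : List (Fin 3)) : Prop := ∃ k, occursAt3 w v k

/-- `C`-balance of a sequence over three letters. -/
def CBalanced (w : ℕ → Fin 3) (C : ℕ) : Prop :=
  ∀ u v : List (Fin 3), IsFactor3 w u → IsFactor3 w v → u.length = v.length →
    ∀ a : Fin 3, |(u.count a : ℤ) - (v.count a : ℤ)| ≤ (C : ℤ)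

lemma count_aux : ∀ (u : List (Fin 3)) (b : Fin 3),
    u.count b = ∑ i ∈ Finset.range u.length, if u.getD i 0 = b then 1 else 0 := by
  intro u b
  induction u with
  | nil => simp
  | cons c tl ih =>
      rw [List.count_cons, List.length_cons, Finset.sum_range_succ']
      simp only [List.getD_cons_succ, List.getD_cons_zero, beq_iff_eq]
      omega

lemma half_le_abs_int_sub_half (k : ℤ) : (1:ℝ)/2 ≤ |(k:ℝ) - 1/2| := by
  rcases le_or_gt 1 k with h | h
  · have : (1:ℝ) ≤ k := by exact_mod_cast h
    rw [abs_of_nonneg (by linarith)]; linarith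
  · have hk : k ≤ 0 := by omega
    have : (k:ℝ) ≤ 0 := by exact_mod_cast hk
    rw [abs_of_nonpos (by linarith)]; linarith

lemma abs_dot_le (c x : Fin 2 → ℝ) : |c 0 * x 0 + c 1 * x 1| ≤ (|c 0| + |c 1|) * ‖x‖ := by
  have h0 : |x 0| ≤ ‖x‖ := by simpa [Real.norm_eq_abs] using norm_le_pi_norm x 0
  have h1 : |x 1| ≤ ‖x‖ := by simpa [Real.norm_eq_abs] using norm_le_pi_norm x 1
  calc |c 0 * x 0 + c 1 * x 1| ≤ |c 0 * x 0| + |c 1 * x 1| := abs_add_le _ _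
    _ = |c 0| * |x 0| + |c 1| * |x 1| := by rw [abs_mul, abs_mul]
    _ ≤ |c 0| * ‖x‖ + |c 1| * ‖x‖ := by
        have := abs_nonneg (c 0); have := abs_nonneg (c 1); gcongr
    _ = (|c 0| + |c 1|) * ‖x‖ := by ring

lemma eq_zero_of_nat_mul_le (x K : ℝ) (h : ∀ n : ℕ, n * |x| ≤ K) : x = 0 := by
  by_contra hx
  have hax : 0 < |x| := abs_pos.2 hx
  obtain ⟨n, hn⟩ := exists_nat_gt (K / |x|)
  have h2 := h n
  rw [div_lt_iff₀ hax] at hn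
  linarith

/-- auxiliary count -/
def Ncnt (w : ℕ → Fin 3) (k n : ℕ) (b : Fin 3) : ℕ :=
  ((Finset.range n).filter fun j => w (k + j) = b).card

lemma Ncnt_sum (w : ℕ → Fin 3) (k n : ℕ) : ∑ b : Fin 3, Ncnt w k n b = n := by
  have := Finset.sum_fiberwise' (Finset.range n) (fun j => w (k + j)) (fun _ => (1:ℕ))
  simpa [Ncnt, Finset.sum_const] using this

lemma count_occursAt (w : ℕ → Fin 3) (u : List (Fin 3)) (k : ℕ)
    (h : occursAt3 w u k) (b : Fin 3) : u.count b = Ncnt w k u.length b := by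
  rw [count_aux, Ncnt, Finset.card_filter]
  refine Finset.sum_congr rfl fun i hi => ?_
  rw [h i (Finset.mem_range.1 hi)]

lemma sum_A (w : ℕ → Fin 3) (A : Fin 3 → Fin 2 → ℝ) (k n : ℕ) :
    ∑ j ∈ Finset.range n, A (w (k + j)) = ∑ b : Fin 3, (Ncnt w k n b : ℝ) • A b := by
  rw [← Finset.sum_fiberwise' (Finset.range n) (fun j => w (k + j)) A]
  refine Finset.sum_congr rfl fun b _ => ?_
  rw [Finset.sum_const, Nat.cast_smul_eq_nsmul]
  rfl

set_option maxHeartbeats 2000000 in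
/-- A natural coding of a minimal rotation on `𝕋² = ℝ²/ℤ²` with a bounded fundamental
domain is finitely balanced. Consequently an Arnoux-Rauzy sequence that is not finitely
balanced is not such a natural coding. -/
theorem stmt11 (w : ℕ → Fin 3)
    -- a bounded fundamental domain `Ω` of `ℝ²/ℤ²`
    (Ω : Set (Fin 2 → ℝ)) (hΩbdd : Bornology.IsBounded Ω)
    (hΩfund : ∀ y : Fin 2 → ℝ, ∃! x : Fin 2 → ℝ, x ∈ Ω ∧
      ∃ m : Fin 2 → ℤ, y = x + (fun j => (m j : ℝ)))
    -- a partition `Ω = Ω₁ ∪ Ω₂ ∪ Ω₃`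
    (Ωp : Fin 3 → Set (Fin 2 → ℝ)) (hcover : (⋃ i, Ωp i) = Ω)
    (hdisj : ∀ i j, i ≠ j → Disjoint (Ωp i) (Ωp j))
    -- the rotation by `t` and the translation vectors `a i` of the induced map
    (t : Fin 2 → ℝ) (a : Fin 3 → Fin 2 → ℝ)
    -- minimality of the rotation by `t` on `𝕋²`
    (hmin : ∀ y z : Fin 2 → ℝ, ∀ ε > (0 : ℝ), ∃ n : ℕ, ∃ m : Fin 2 → ℤ,
      ‖y + (n : ℝ) • t - z - (fun j => (m j : ℝ))‖ < ε)
    -- on `Ω i` the induced map is the translation by `a i`, which equals `t` mod `ℤ²`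
    (hind : ∀ i, ∃ m : Fin 2 → ℤ, a i = t + (fun j => (m j : ℝ)))
    (hmap : ∀ i, ∀ x ∈ Ωp i, x + a i ∈ Ω)
    -- `w` codes the orbit `p` of some point of `Ω` under the induced map
    (p : ℕ → Fin 2 → ℝ) (hp0 : p 0 ∈ Ω)
    (hstep : ∀ k, p (k + 1) = p k + a (w k))
    (hcode : ∀ k, p k ∈ Ωp (w k)) :
    ∃ C : ℕ, 1 ≤ C ∧ CBalanced w C := by
  classical
  obtain ⟨R₀, hR₀⟩ := isBounded_iff_forall_norm_le.1 hΩbdd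
  have pΩ : ∀ k, p k ∈ Ω := fun k => by
    rw [← hcover]; exact Set.mem_iUnion.2 ⟨w k, hcode k⟩
  have hR0nn : 0 ≤ R₀ := (norm_nonneg _).trans (hR₀ _ (pΩ 0))
  choose m hm using hind
  set A : Fin 3 → Fin 2 → ℝ := fun i j => (m i j : ℝ) with hA
  have hmA : ∀ i, a i = t + A i := fun i => hm i
  -- telescoping
  have tele : ∀ k n, p (k + n) = p k + (n : ℝ) • t + ∑ j ∈ Finset.range n, A (w (k + j)) := by
    intro k n
    induction n with
    | zero => simp
    | succ n ih =>
        have hkn : k + (n + 1) = (k + n) + 1 := by ring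
        rw [hkn, hstep, ih, hmA, Finset.sum_range_succ]
        push_cast
        module
  -- uniform bound
  have bnd : ∀ (k n : ℕ), ‖(n : ℝ) • t + ∑ j ∈ Finset.range n, A (w (k + j))‖ ≤ 2 * R₀ := by
    intro k n
    have h1 := hR₀ _ (pΩ (k + n))
    have h2 := hR₀ _ (pΩ k)
    have he : (n : ℝ) • t + ∑ j ∈ Finset.range n, A (w (k + j)) = p (k + n) - p k := by
      rw [tele k n]; abel
    rw [he]
    calc ‖p (k + n) - p k‖ ≤ ‖p (k + n)‖ + ‖p k‖ := norm_sub_le _ _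
      _ ≤ 2 * R₀ := by linarith
  -- linear independence of the translation lattice vectors
  set ur : Fin 2 → ℝ := fun j => A 1 j - A 0 j with hur
  set vr : Fin 2 → ℝ := fun j => A 2 j - A 0 j with hvr
  set Dr : ℝ := ur 0 * vr 1 - ur 1 * vr 0 with hDr_def
  have hDr : Dr ≠ 0 := by
    intro hD0
    -- integer determinant is zero
    have hZ : (m 1 0 - m 0 0) * (m 2 1 - m 0 1) - (m 1 1 - m 0 1) * (m 2 0 - m 0 0) = 0 := by
      have h' := hD0
      rw [hDr_def, hur, hvr, hA] at h'
      beta_reduce at h'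
      exact_mod_cast h'
    -- find an integer covector annihilating all differences
    have hc : ∃ c : Fin 2 → ℤ, (c 0 ≠ 0 ∨ c 1 ≠ 0) ∧
        (∀ i, c 0 * m i 0 + c 1 * m i 1 = c 0 * m 0 0 + c 1 * m 0 1) := by
      by_cases h1 : m 1 0 - m 0 0 = 0 ∧ m 1 1 - m 0 1 = 0
      · by_cases h2 : m 2 0 - m 0 0 = 0 ∧ m 2 1 - m 0 1 = 0
        · refine ⟨![1, 0], Or.inl one_ne_zero, ?_⟩
          intro i
          fin_cases i <;> simp <;> omega
        · refine ⟨![-(m 2 1 - m 0 1), m 2 0 - m 0 0], ?_, ?_⟩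
          · by_contra hcon
            push_neg at hcon
            simp at hcon
            exact h2 ⟨hcon.2, by omega⟩
          · intro i
            fin_cases i <;> simp
            · linear_combination (-1 : ℤ) * hZ
            · ring
      · refine ⟨![-(m 1 1 - m 0 1), m 1 0 - m 0 0], ?_, ?_⟩
        · by_contra hcon
          push_neg at hcon
          simp at hcon
          exact h1 ⟨hcon.2, by omega⟩
        · intro i
          fin_cases i <;> simp
          · ring
          · linear_combination hZ
    obtain ⟨c, hcne, hcdot⟩ := hc
    set cr : Fin 2 → ℝ := fun j => (c j : ℝ) with hcr
    set g0 : ℤ := c 0 * m 0 0 + c 1 * m 0 1 with hg0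
    have key : ∀ b, cr 0 * A b 0 + cr 1 * A b 1 = (g0 : ℝ) := by
      intro b
      have hb := hcdot b
      show (c 0 : ℝ) * (m b 0 : ℝ) + (c 1 : ℝ) * (m b 1 : ℝ) = ((c 0 * m 0 0 + c 1 * m 0 1 : ℤ) : ℝ)
      exact_mod_cast congrArg (Int.cast : ℤ → ℝ) hb
    -- the dot product with the orbit displacement is n * (cr·t + g0)
    have ht0 : cr 0 * t 0 + cr 1 * t 1 + (g0 : ℝ) = 0 := by
      apply eq_zero_of_nat_mul_le _ ((|cr 0| + |cr 1|) * (2 * R₀))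
      intro n
      set X : Fin 2 → ℝ := (n : ℝ) • t + ∑ j ∈ Finset.range n, A (w (0 + j)) with hX
      have hdot : cr 0 * X 0 + cr 1 * X 1 =
          (n : ℝ) * (cr 0 * t 0 + cr 1 * t 1 + (g0 : ℝ)) := by
        rw [hX]
        simp only [Pi.add_apply, Pi.smul_apply, smul_eq_mul, Finset.sum_apply]
        have hs0 : ∑ j ∈ Finset.range n, (cr 0 * A (w (0 + j)) 0 + cr 1 * A (w (0 + j)) 1)
            = (n : ℝ) * (g0 : ℝ) := by
          rw [Finset.sum_congr rfl fun j _ => key (w (0 + j))]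
          rw [Finset.sum_const, Finset.card_range, nsmul_eq_mul]
        rw [Finset.sum_add_distrib, ← Finset.mul_sum, ← Finset.mul_sum] at hs0
        linear_combination hs0
      calc (n : ℝ) * |cr 0 * t 0 + cr 1 * t 1 + (g0 : ℝ)|
            = |cr 0 * X 0 + cr 1 * X 1| := by
              rw [hdot, abs_mul, abs_of_nonneg (by positivity : (0:ℝ) ≤ (n:ℝ))]
        _ ≤ (|cr 0| + |cr 1|) * ‖X‖ := abs_dot_le cr X
        _ ≤ (|cr 0| + |cr 1|) * (2 * R₀) := by
              have := bnd 0 n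
              have hcnn : 0 ≤ |cr 0| + |cr 1| := by positivity
              exact mul_le_mul_of_nonneg_left (by rw [hX] at *; exact this) hcnn
    -- contradiction with minimality
    have hcne' : cr 0 ≠ 0 ∨ cr 1 ≠ 0 := by
      rcases hcne with h | h
      · exact Or.inl (by show (c 0 : ℝ) ≠ 0; exact_mod_cast h)
      · exact Or.inr (by show (c 1 : ℝ) ≠ 0; exact_mod_cast h)
    have hsq : (0:ℝ) < cr 0 ^ 2 + cr 1 ^ 2 := by
      rcases hcne' with h | h
      · have := pow_pos (abs_pos.2 h) 2
        nlinarith [sq_nonneg (cr 1), sq_abs (cr 0)]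
      · have := pow_pos (abs_pos.2 h) 2
        nlinarith [sq_nonneg (cr 0), sq_abs (cr 1)]
    set z : Fin 2 → ℝ := fun j => cr j / (2 * (cr 0 ^ 2 + cr 1 ^ 2)) with hz_def
    have hz : cr 0 * z 0 + cr 1 * z 1 = 1 / 2 := by
      rw [hz_def]
      field_simp
    set S : ℝ := |cr 0| + |cr 1| with hS_def
    have hSpos : 0 < S := by
      rcases hcne' with h | h
      · have := abs_pos.2 h; have := abs_nonneg (cr 1); rw [hS_def]; linarith
      · have := abs_pos.2 h; have := abs_nonneg (cr 0); rw [hS_def]; linarith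
    obtain ⟨n, M, hnM⟩ := hmin 0 z (1 / (2 * S)) (by positivity)
    set vec : Fin 2 → ℝ := 0 + (n : ℝ) • t - z - (fun j => (M j : ℝ)) with hvec
    have hval : cr 0 * vec 0 + cr 1 * vec 1 =
        (((n : ℤ) * (-g0) - (c 0 * M 0 + c 1 * M 1) : ℤ) : ℝ) - 1 / 2 := by
      have hv0 : vec 0 = (n : ℝ) * t 0 - z 0 - (M 0 : ℝ) := by
        rw [hvec]; simp [smul_eq_mul]
      have hv1 : vec 1 = (n : ℝ) * t 1 - z 1 - (M 1 : ℝ) := by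
        rw [hvec]; simp [smul_eq_mul]
      rw [hv0, hv1]
      push_cast
      have ht0' : cr 0 * t 0 + cr 1 * t 1 = -(g0 : ℝ) := by linarith
      nlinarith [hz, ht0']
    have hlow : (1:ℝ) / 2 ≤ |cr 0 * vec 0 + cr 1 * vec 1| := by
      rw [hval]
      exact half_le_abs_int_sub_half _
    have hup : |cr 0 * vec 0 + cr 1 * vec 1| < 1 / 2 := by
      calc |cr 0 * vec 0 + cr 1 * vec 1| ≤ S * ‖vec‖ := by
            rw [hS_def]; exact abs_dot_le cr vec
        _ < S * (1 / (2 * S)) := by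
            apply mul_lt_mul_of_pos_left _ hSpos
            rw [hvec]; exact hnM
        _ = 1 / 2 := by field_simp
    linarith
  -- the balance bound
  have hDpos : 0 < |Dr| := abs_pos.2 hDr
  set Bd : ℝ := ((|vr 0| + |vr 1|) * (4 * R₀) + (|ur 0| + |ur 1|) * (4 * R₀)) / |Dr| with hBd
  have hBdnn : 0 ≤ Bd := by positivity
  obtain ⟨C0, hC0⟩ := exists_nat_ge (2 * Bd)
  refine ⟨C0 + 1, by omega, ?_⟩
  intro U V hU hV hlen aL
  obtain ⟨k, hUk⟩ := hU
  obtain ⟨k', hVk⟩ := hV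
  set n := U.length with hn
  have hVlen : V.length = n := hlen.symm
  set d : Fin 3 → ℝ := fun b => (Ncnt w k n b : ℝ) - (Ncnt w k' n b : ℝ) with hd
  have hdsum : d 0 + d 1 + d 2 = 0 := by
    have h1 := Ncnt_sum w k n
    have h2 := Ncnt_sum w k' n
    rw [Fin.sum_univ_three] at h1 h2
    have h1' : (Ncnt w k n 0 : ℝ) + (Ncnt w k n 1 : ℝ) + (Ncnt w k n 2 : ℝ) = (n : ℝ) := by
      exact_mod_cast h1
    have h2' : (Ncnt w k' n 0 : ℝ) + (Ncnt w k' n 1 : ℝ) + (Ncnt w k' n 2 : ℝ) = (n : ℝ) := by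
      exact_mod_cast h2
    simp only [hd]
    linarith
  set E : Fin 2 → ℝ := fun j => ∑ b : Fin 3, d b * A b j with hE_def
  have hEeq : E = ((n : ℝ) • t + ∑ i ∈ Finset.range n, A (w (k + i)))
      - ((n : ℝ) • t + ∑ i ∈ Finset.range n, A (w (k' + i))) := by
    rw [sum_A w A k n, sum_A w A k' n]
    funext j
    simp only [hE_def, hd, Pi.sub_apply, Pi.add_apply, Pi.smul_apply, smul_eq_mul,
      Finset.sum_apply, Fin.sum_univ_three]
    ring
  have hEnorm : ‖E‖ ≤ 4 * R₀ := by
    rw [hEeq]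
    have b1 := bnd k n
    have b2 := bnd k' n
    calc ‖((n : ℝ) • t + ∑ i ∈ Finset.range n, A (w (k + i)))
        - ((n : ℝ) • t + ∑ i ∈ Finset.range n, A (w (k' + i)))‖
        ≤ ‖(n : ℝ) • t + ∑ i ∈ Finset.range n, A (w (k + i))‖
          + ‖(n : ℝ) • t + ∑ i ∈ Finset.range n, A (w (k' + i))‖ := norm_sub_le _ _
      _ ≤ 4 * R₀ := by linarith
  have hE0 : |E 0| ≤ 4 * R₀ := by
    have := norm_le_pi_norm E 0
    rw [Real.norm_eq_abs] at this
    linarith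
  have hE1 : |E 1| ≤ 4 * R₀ := by
    have := norm_le_pi_norm E 1
    rw [Real.norm_eq_abs] at this
    linarith
  have hEj : ∀ j, E j = d 1 * ur j + d 2 * vr j := by
    intro j
    simp only [hE_def, Fin.sum_univ_three, hur, hvr]
    linear_combination (A 0 j) * hdsum
  have hd1D : d 1 * Dr = E 0 * vr 1 - E 1 * vr 0 := by
    rw [hDr_def, hEj 0, hEj 1]; ring
  have hd2D : d 2 * Dr = ur 0 * E 1 - ur 1 * E 0 := by
    rw [hDr_def, hEj 0, hEj 1]; ring
  have habs1 : |d 1| ≤ Bd := by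
    have hb : |d 1| * |Dr| ≤ (|vr 0| + |vr 1|) * (4 * R₀) := by
      rw [← abs_mul, hd1D]
      calc |E 0 * vr 1 - E 1 * vr 0| ≤ |E 0 * vr 1| + |E 1 * vr 0| := abs_sub _ _
        _ = |E 0| * |vr 1| + |E 1| * |vr 0| := by rw [abs_mul, abs_mul]
        _ ≤ (4 * R₀) * |vr 1| + (4 * R₀) * |vr 0| := by
            have := abs_nonneg (vr 0); have := abs_nonneg (vr 1); gcongr
        _ = (|vr 0| + |vr 1|) * (4 * R₀) := by ring
    have h1 : |d 1| ≤ (|vr 0| + |vr 1|) * (4 * R₀) / |Dr| := by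
      rw [le_div_iff₀ hDpos]; exact hb
    refine h1.trans ?_
    rw [hBd]
    gcongr
    have : 0 ≤ (|ur 0| + |ur 1|) * (4 * R₀) := by positivity
    linarith
  have habs2 : |d 2| ≤ Bd := by
    have hb : |d 2| * |Dr| ≤ (|ur 0| + |ur 1|) * (4 * R₀) := by
      rw [← abs_mul, hd2D]
      calc |ur 0 * E 1 - ur 1 * E 0| ≤ |ur 0 * E 1| + |ur 1 * E 0| := abs_sub _ _
        _ = |ur 0| * |E 1| + |ur 1| * |E 0| := by rw [abs_mul, abs_mul]
        _ ≤ |ur 0| * (4 * R₀) + |ur 1| * (4 * R₀) := by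
            have := abs_nonneg (ur 0); have := abs_nonneg (ur 1); gcongr
        _ = (|ur 0| + |ur 1|) * (4 * R₀) := by ring
    have h1 : |d 2| ≤ (|ur 0| + |ur 1|) * (4 * R₀) / |Dr| := by
      rw [le_div_iff₀ hDpos]; exact hb
    refine h1.trans ?_
    rw [hBd]
    gcongr
    have : 0 ≤ (|vr 0| + |vr 1|) * (4 * R₀) := by positivity
    linarith
  have habs0 : |d 0| ≤ 2 * Bd := by
    have h0 : d 0 = -(d 1 + d 2) := by linarith
    rw [h0, abs_neg]
    calc |d 1 + d 2| ≤ |d 1| + |d 2| := abs_add_le _ _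
      _ ≤ 2 * Bd := by linarith
  have hall : ∀ b : Fin 3, |d b| ≤ 2 * Bd := by
    intro b
    match b with
    | 0 => exact habs0
    | 1 => exact habs1.trans (by linarith)
    | 2 => exact habs2.trans (by linarith)
  have hUc : (U.count aL : ℤ) = (Ncnt w k n aL : ℤ) := by
    exact_mod_cast congrArg (Nat.cast : ℕ → ℤ) (count_occursAt w U k hUk aL)
  have hVc : (V.count aL : ℤ) = (Ncnt w k' n aL : ℤ) := by
    have := count_occursAt w V k' hVk aL
    rw [hVlen] at this
    exact_mod_cast congrArg (Nat.cast : ℕ → ℤ) this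
  rw [hUc, hVc]
  have hr : |d aL| ≤ ((C0 + 1 : ℕ) : ℝ) := by
    refine (hall aL).trans ?_
    push_cast
    linarith
  have hfin : ((|(Ncnt w k n aL : ℤ) - (Ncnt w k' n aL : ℤ)| : ℤ) : ℝ) ≤ ((C0 + 1 : ℕ) : ℝ) := by
    rw [Int.cast_abs]
    push_cast
    simpa [hd] using hr
  exact_mod_cast hfin
end

section
/- Let σ be a primitive sequence of substitutions over a finite alphabet A. Then there exists at least one and at most |A| limit sequences for σ. -/
/-- The image of an infinite sequence under a (nonerasing) substitution: the `n`-th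
letter of the concatenation `s (u 0) s (u 1) s (u 2) ⋯`. -/
def subApplyG {A : Type*} (s : A → List A) (u : ℕ → A) (n : ℕ) : A :=
  (((List.range (n + 1)).map u).flatMap s).getD n (u 0)

/-- The incidence matrix of a substitution. -/
def incMatG {A : Type*} [DecidableEq A] (s : A → List A) : Matrix A A ℕ :=
  Matrix.of fun i j => (s j).count i

/-- Primitivity of a sequence of substitutions: for each `m` there is `n > m` such that
the product `M_m ⋯ M_{n-1}` of incidence matrices is strictly positive. -/
def PrimitiveSeq {A : Type*} [Fintype A] [DecidableEq A] (s : ℕ → A → List A) : Prop :=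
  ∀ m : ℕ, ∃ n > m, ∀ i j : A,
    0 < (((List.range (n - m)).map fun k => incMatG (s (m + k))).prod) i j

/-- `w` is a limit sequence (S-adic sequence) for the directive sequence `s`. -/
def IsLimitSeq {A : Type*} (s : ℕ → A → List A) (w : ℕ → A) : Prop :=
  ∃ ws : ℕ → ℕ → A, ws 0 = w ∧ ∀ n, ws n = subApplyG (s n) (ws (n + 1))

/-!
Existence is a compactness argument: for a finite alphabet, `ℕ → ℕ → A` is compact, `subApplyG`
is continuous, and the sets of sequences `(w⁽ⁿ⁾)` satisfying the first `N` equations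
`w⁽ⁿ⁾ = σₙ(w⁽ⁿ⁺¹⁾)` form a decreasing sequence of nonempty closed sets.

For the upper bound, primitivity (when `|A| ≥ 2`) makes `|σₙ ⋯ σₙ₊ₖ₋₁(b)|` unbounded in `k`,
uniformly in the letter `b`. Since `σₙ ⋯ σₙ₊ₖ₋₁(w⁽ⁿ⁺ᵏ⁾₀)` is a prefix of `w⁽ⁿ⁾`, a limit
sequence is determined by the first letters `w⁽ⁿ⁾₀` on any tail of levels, and equality of first
letters at level `n + 1` forces it at level `n`. Hence two distinct limit sequences have distinct
first letters at all large levels, and one large level `N` separates any finite family of them: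
`w ↦ w⁽ᴺ⁾₀` is injective on it.
-/

open Filter
open scoped Matrix

section Lists

variable {A : Type*}

/-- `substBlock s n k l = σₙ (σₙ₊₁ (⋯ σₙ₊ₖ₋₁ (l)))`. -/
def substBlock (s : ℕ → A → List A) : ℕ → ℕ → List A → List A
  | _, 0, l => l
  | n, k + 1, l => (substBlock s (n + 1) k l).flatMap (s n)

def IsPrefixOfSeq (l : List A) (u : ℕ → A) : Prop :=
  ∀ i (h : i < l.length), u i = l[i]

variable {s : ℕ → A → List A}

theorem substBlock_add (n k₁ k₂ : ℕ) (l : List A) :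
    substBlock s n (k₁ + k₂) l = substBlock s n k₁ (substBlock s (n + k₁) k₂ l) := by
  induction k₁ generalizing n with
  | zero => simp [substBlock]
  | succ k₁ ih =>
    rw [Nat.add_right_comm, substBlock, ih, Nat.add_right_comm n 1 k₁, Nat.add_assoc n k₁ 1]
    rfl

theorem length_le_length_flatMap {t : A → List A} (ht : ∀ a, t a ≠ []) (l : List A) :
    l.length ≤ (l.flatMap t).length := by
  rw [List.length_flatMap]
  simpa using List.length_le_sum_of_one_le (l.map fun a => (t a).length)
    (by simpa [Nat.one_le_iff_ne_zero] using fun a _ => ht a)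

theorem IsPrefixOfSeq.flatMap {t : A → List A} (ht : ∀ a, t a ≠ []) {l : List A} {u : ℕ → A}
    (hl : IsPrefixOfSeq l u) : IsPrefixOfSeq (l.flatMap t) (subApplyG t u) := by
  intro j hj
  -- `subApplyG t u j` only reads `u 0, …, u j`, and on these `u` agrees with `l.take (j + 1)`.
  set P := l.take (j + 1)
  have hPu : P <+: (List.range (j + 1)).map u := by
    rw [List.prefix_iff_eq_take]
    refine List.ext_getElem (by simp [P]) fun i hi _ => ?_
    simp only [List.length_take, P] at hi
    simp [P, hl i (by omega)]
  have hjP : j < (P.flatMap t).length := by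
    rcases le_or_gt l.length (j + 1) with h | h
    · simpa [P, List.take_of_length_le h] using hj
    · have hP : P.length = j + 1 := by simp [P]; omega
      have := length_le_length_flatMap ht P
      omega
  have hPl : P.flatMap t <+: l.flatMap t := (List.take_prefix _ _).flatMap t
  have hPu' := hPu.flatMap t
  rw [subApplyG, List.getD_eq_getElem _ _ (hjP.trans_le hPu'.length_le), ← hPu'.getElem hjP,
    ← hPl.getElem hjP]

end Lists

section Counting

variable {A : Type*} [Fintype A] [DecidableEq A] {s : ℕ → A → List A}

def blockMat (s : ℕ → A → List A) (n k : ℕ) : Matrix A A ℕ :=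
  ((List.range k).map fun t => incMatG (s (n + t))).prod

theorem blockMat_succ (n k : ℕ) :
    blockMat s n (k + 1) = incMatG (s n) * blockMat s (n + 1) k := by
  simp only [blockMat, List.range_succ_eq_map, List.map_cons, List.prod_cons, List.map_map,
    Nat.add_zero]
  congr 3
  funext t
  simp [Nat.add_right_comm n 1 t, Nat.add_assoc]

theorem sum_count_eq_length (l : List A) : ∑ i, l.count i = l.length := by
  induction l with
  | nil => simp
  | cons a l ih => simp [List.count_cons, Finset.sum_add_distrib, ih]

theorem count_flatMap_eq_mulVec (t : A → List A) (l : List A) (i : A) :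
    (l.flatMap t).count i = (incMatG t *ᵥ fun j => l.count j) i := by
  simp only [Matrix.mulVec, dotProduct, incMatG, Matrix.of_apply]
  induction l with
  | nil => simp
  | cons a l ih => simp [List.count_cons, Finset.sum_add_distrib, ih, mul_add, add_comm]

theorem count_substBlock (n k : ℕ) (l : List A) (i : A) :
    (substBlock s n k l).count i = (blockMat s n k *ᵥ fun j => l.count j) i := by
  induction k generalizing n i with
  | zero => simp [substBlock, blockMat, Matrix.mulVec, dotProduct, Matrix.one_apply]
  | succ k ih =>
    rw [substBlock, count_flatMap_eq_mulVec, blockMat_succ, ← Matrix.mulVec_mulVec]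
    congr 2
    funext j
    exact ih (n + 1) j

theorem card_mul_length_le_length_substBlock {n k : ℕ} (hpos : ∀ i j, 0 < blockMat s n k i j)
    (l : List A) : Fintype.card A * l.length ≤ (substBlock s n k l).length := by
  rw [← sum_count_eq_length (substBlock s n k l), ← sum_count_eq_length l, ← Finset.card_univ,
    Finset.card_eq_sum_ones, Finset.sum_mul]
  refine Finset.sum_le_sum fun i _ => ?_
  rw [count_substBlock, one_mul]
  exact Finset.sum_le_sum fun j _ => Nat.le_mul_of_pos_left _ (hpos i j)

theorem exists_lt_length_substBlock (hprim : PrimitiveSeq s) (hcard : 2 ≤ Fintype.card A)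
    (j n : ℕ) : ∃ k, ∀ b, j < (substBlock s n k [b]).length := by
  induction j generalizing n with
  | zero => exact ⟨0, fun b => by simp [substBlock]⟩
  | succ j ih =>
    obtain ⟨n', -, hpos⟩ := hprim n
    obtain ⟨k, hk⟩ := ih (n + (n' - n))
    refine ⟨n' - n + k, fun b => ?_⟩
    have := card_mul_length_le_length_substBlock hpos (substBlock s (n + (n' - n)) k [b])
    rw [substBlock_add]
    nlinarith [hk b]

end Counting

section Chains

variable {A : Type*} {s : ℕ → A → List A} {ws ws' : ℕ → ℕ → A}

theorem isPrefixOfSeq_substBlock (hne : ∀ n a, s n a ≠ [])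
    (hws : ∀ n, ws n = subApplyG (s n) (ws (n + 1))) (n k : ℕ) :
    IsPrefixOfSeq (substBlock s n k [ws (n + k) 0]) (ws n) := by
  induction k generalizing n with
  | zero =>
    intro i hi
    simp only [substBlock, List.length_singleton, Nat.lt_one_iff] at hi
    subst hi
    rfl
  | succ k ih =>
    rw [hws n, show n + (k + 1) = n + 1 + k by omega]
    exact (ih (n + 1)).flatMap (hne n)

theorem apply_eq_of_head_eq (hne : ∀ n a, s n a ≠ [])
    (hws : ∀ n, ws n = subApplyG (s n) (ws (n + 1)))
    (hws' : ∀ n, ws' n = subApplyG (s n) (ws' (n + 1))) {n k j : ℕ}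
    (h : ws (n + k) 0 = ws' (n + k) 0) (hj : j < (substBlock s n k [ws (n + k) 0]).length) :
    ws n j = ws' n j := by
  rw [isPrefixOfSeq_substBlock hne hws n k j hj,
    isPrefixOfSeq_substBlock hne hws' n k j (h ▸ hj)]
  simp only [h]

theorem eventually_head_ne [Fintype A] [DecidableEq A] (hne : ∀ n a, s n a ≠ [])
    (hprim : PrimitiveSeq s) (hws : ∀ n, ws n = subApplyG (s n) (ws (n + 1)))
    (hws' : ∀ n, ws' n = subApplyG (s n) (ws' (n + 1))) (h : ws 0 ≠ ws' 0) :
    ∀ᶠ n in atTop, ws n 0 ≠ ws' n 0 := by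
  obtain ⟨j, hj⟩ := Function.ne_iff.1 h
  have hcard : 2 ≤ Fintype.card A := by
    by_contra! h1
    have := Fintype.card_le_one_iff.1 (Nat.le_of_lt_succ h1)
    exact hj (this _ _)
  obtain ⟨K, hK⟩ := exists_lt_length_substBlock hprim hcard j 0
  have head_succ : ∀ n, ws (n + 1) 0 = ws' (n + 1) 0 → ws n 0 = ws' n 0 := fun n h1 =>
    apply_eq_of_head_eq (k := 1) hne hws hws' h1
      (List.length_pos_iff.2 (by simpa [substBlock] using hne n _))
  filter_upwards [eventually_ge_atTop K] with n hn heq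
  have hK_eq : ws K 0 = ws' K 0 := by
    induction n, hn using Nat.le_induction with
    | base => exact heq
    | succ n _ ih => exact ih (head_succ n heq)
  exact hj (apply_eq_of_head_eq hne hws hws' (by simpa using hK_eq) (by simpa using hK _))

theorem card_le_of_forall_isLimitSeq [Fintype A] [DecidableEq A] (hne : ∀ n a, s n a ≠ [])
    (hprim : PrimitiveSeq s) (t : Finset (ℕ → A)) (ht : ∀ w ∈ t, IsLimitSeq s w) :
    t.card ≤ Fintype.card A := by
  choose! WS hWS0 hWS using ht
  have hsep : ∀ᶠ n in atTop, ∀ p ∈ t ×ˢ t, p.1 ≠ p.2 → WS p.1 n 0 ≠ WS p.2 n 0 := by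
    refine (eventually_all_finset _).2 fun p hp => eventually_imp_distrib_left.2 fun hp' => ?_
    obtain ⟨h1, h2⟩ := Finset.mem_product.1 hp
    exact eventually_head_ne hne hprim (hWS _ h1) (hWS _ h2) (by rwa [hWS0 _ h1, hWS0 _ h2])
  obtain ⟨N, hN⟩ := hsep.exists
  refine le_trans (Finset.card_le_card_of_injOn (fun w => WS w N 0)
    (t := Finset.univ) (fun _ _ => Finset.mem_coe.2 (Finset.mem_univ _)) fun w hw w' hw' h => ?_)
    Finset.card_univ.le
  by_contra hww'
  exact hN (w, w') (Finset.mem_product.2 ⟨hw, hw'⟩) hww' h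

end Chains

section Existence

variable {A : Type*}

theorem continuous_subApplyG [TopologicalSpace A] [DiscreteTopology A] (t : A → List A) :
    Continuous (subApplyG t) := by
  refine continuous_pi fun j => ?_
  have : (fun u => subApplyG t u j) =
      (fun v : Fin (j + 1) → A => ((List.ofFn v).flatMap t).getD j (v 0)) ∘
        fun u i => u i := by
    funext u
    simp only [Function.comp_apply, subApplyG, List.ofFn_eq_map]
    rw [← List.map_coe_finRange_eq_range, List.map_map]
    rfl
  rw [this]
  exact continuous_of_discreteTopology.comp (continuous_pi fun i => continuous_apply _)

def descend (s : ℕ → A → List A) (b : A) : ℕ → ℕ → ℕ → A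
  | 0, _ => fun _ => b
  | k + 1, m => subApplyG (s m) (descend s b k (m + 1))

theorem exists_isLimitSeq [Finite A] [Nonempty A] (s : ℕ → A → List A) :
    ∃ w, IsLimitSeq s w := by
  let _ : TopologicalSpace A := ⊥
  have : DiscreteTopology A := ⟨rfl⟩
  let C : ℕ → Set (ℕ → ℕ → A) := fun N => {ws | ∀ n < N, ws n = subApplyG (s n) (ws (n + 1))}
  have hC_closed : ∀ N, IsClosed (C N) := fun N => by
    simp only [C, Set.ofPred_forall]
    exact isClosed_iInter fun n => isClosed_iInter fun _ => isClosed_eq (continuous_apply n)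
      ((continuous_subApplyG _).comp (continuous_apply _))
  have hC_nonempty : ∀ N, (C N).Nonempty := fun N => by
    obtain ⟨b⟩ := ‹Nonempty A›
    refine ⟨fun n => descend s b (N - n) n, fun n hn => ?_⟩
    show descend s b (N - n) n = subApplyG (s n) (descend s b (N - (n + 1)) (n + 1))
    rw [show N - n = N - (n + 1) + 1 by omega]
    rfl
  obtain ⟨ws, hws⟩ := IsCompact.nonempty_iInter_of_sequence_nonempty_isCompact_isClosed C
    (fun N ws h n hn => h n (Nat.lt_succ_of_lt hn)) hC_nonempty (hC_closed 0).isCompact hC_closed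
  exact ⟨ws 0, ws, rfl, fun n => Set.mem_iInter.1 hws (n + 1) n n.lt_succ_self⟩

end Existence

/-- A primitive sequence of substitutions over a finite alphabet `A` has at least one
and at most `|A|` limit sequences. -/
theorem stmt12 {A : Type*} [Fintype A] [Nonempty A] [DecidableEq A]
    (s : ℕ → A → List A) (hne : ∀ n a, s n a ≠ []) (hprim : PrimitiveSeq s) :
    {w : ℕ → A | IsLimitSeq s w}.Nonempty ∧
    {w : ℕ → A | IsLimitSeq s w}.Finite ∧
    {w : ℕ → A | IsLimitSeq s w}.ncard ≤ Fintype.card A := by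
  have hfin : {w : ℕ → A | IsLimitSeq s w}.Finite := by
    by_contra h
    obtain ⟨t, hts, ht⟩ := Set.Infinite.exists_subset_card_eq h (Fintype.card A + 1)
    have := card_le_of_forall_isLimitSeq hne hprim t hts
    omega
  refine ⟨exists_isLimitSeq s, hfin, ?_⟩
  rw [Set.ncard_eq_toFinset_card _ hfin]
  exact card_le_of_forall_isLimitSeq hne hprim _ fun w => hfin.mem_toFinset.1
end

section
/- Let σ be a primitive sequence of substitutions over a finite alphabet A and let w be a limit sequence of σ. Then the S-adic system (X_w, Σ), where X_w is the shift-orbit closure of w in A^ℕ, is minimal: every orbit is dense in X_w. -/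
/-- The shift-orbit of a sequence. -/
def orbitOf {A : Type*} (w : ℕ → A) : Set (ℕ → A) := {v | ∃ k : ℕ, v = fun n => w (n + k)}

namespace SAdic

variable {A : Type*}

section Words

def pref (u : ℕ → A) (N : ℕ) : List A := (List.range N).map u

@[simp] lemma length_pref (u : ℕ → A) (N : ℕ) : (pref u N).length = N := by
  simp [pref]

@[simp] lemma getElem_pref (u : ℕ → A) {N i : ℕ} (h : i < (pref u N).length) :
    (pref u N)[i] = u i := by
  simp [pref]

lemma pref_succ (u : ℕ → A) (N : ℕ) : pref u (N + 1) = pref u N ++ [u N] := by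
  simp [pref, List.range_succ]

lemma pref_isPrefix_pref (u : ℕ → A) {M N : ℕ} (h : M ≤ N) : pref u M <+: pref u N := by
  obtain ⟨t, rfl⟩ := Nat.exists_eq_add_of_le h
  simp only [pref, List.range_add, List.map_append]
  exact List.prefix_append _ _

def OccursAt (w : ℕ → A) (u : List A) (p : ℕ) : Prop :=
  ∀ i (hi : i < u.length), w (p + i) = u[i]

namespace OccursAt

variable {w : ℕ → A} {u l₁ l₂ : List A} {p : ℕ}

lemma of_append_left (h : OccursAt w (l₁ ++ l₂) p) : OccursAt w l₁ p := fun i hi => by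
  rw [h i (by simp; omega), List.getElem_append_left hi]

lemma of_append_right (h : OccursAt w (l₁ ++ l₂) p) : OccursAt w l₂ (p + l₁.length) :=
  fun i hi => by
    rw [add_assoc, h _ (by simp; omega), List.getElem_append_right (by omega)]
    simp

lemma of_infix (h : OccursAt w l₁ p) (hu : u <:+: l₁) :
    ∃ r, r + u.length ≤ l₁.length ∧ OccursAt w u (p + r) := by
  obtain ⟨l, l', rfl⟩ := hu
  exact ⟨l.length, by simp, h.of_append_left.of_append_right⟩

lemma eq_pref (h : OccursAt w u 0) : u = pref w u.length :=
  List.ext_getElem (by simp) fun i hi _ => by simp [← h i hi]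

end OccursAt

end Words

section Substitution

variable {f g : A → List A}

lemma mul_le_length_flatMap {L : ℕ} {l : List A} (h : ∀ a ∈ l, L ≤ (f a).length) :
    l.length * L ≤ (l.flatMap f).length := by
  induction l with
  | nil => simp
  | cons a l ih =>
    simp only [List.flatMap_cons, List.length_append, List.length_cons, List.forall_mem_cons] at *
    nlinarith [ih h.2, h.1]

lemma length_le_length_flatMap (hf : ∀ a, f a ≠ []) (l : List A) :
    l.length ≤ (l.flatMap f).length := by
  simpa using mul_le_length_flatMap (L := 1) fun a _ => List.length_pos_iff.2 (hf a)

lemma occursAt_subApplyG (hf : ∀ a, f a ≠ []) (u : ℕ → A) (N : ℕ) :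
    OccursAt (subApplyG f u) ((pref u N).flatMap f) 0 := by
  intro i hi
  have hi' : i < ((pref u (i + 1)).flatMap f).length :=
    (length_le_length_flatMap hf _).trans_lt' (by simp)
  rw [zero_add]
  change ((pref u (i + 1)).flatMap f).getD i (u 0) = _
  rw [List.getD_eq_getElem _ _ hi']
  rcases le_total N (i + 1) with h | h
  · exact (((pref_isPrefix_pref u h).flatMap f).getElem hi).symm
  · exact ((pref_isPrefix_pref u h).flatMap f).getElem hi'

lemma subApplyG_singleton (u : ℕ → A) : subApplyG (fun a => [a]) u = u := by
  funext i
  simpa using occursAt_subApplyG (fun a => List.cons_ne_nil a []) u (i + 1) i (by simp)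

def blockStart (f : A → List A) (v : ℕ → A) (t : ℕ) : ℕ := ((pref v t).flatMap f).length

lemma blockStart_succ (f : A → List A) (v : ℕ → A) (t : ℕ) :
    blockStart f v (t + 1) = blockStart f v t + (f (v t)).length := by
  simp [blockStart, pref_succ]

lemma occursAt_block (hf : ∀ a, f a ≠ []) (v : ℕ → A) (t : ℕ) :
    OccursAt (subApplyG f v) (f (v t)) (blockStart f v t) := by
  have h := occursAt_subApplyG hf v (t + 1)
  rw [pref_succ, List.flatMap_append, List.flatMap_singleton] at h
  rw [← zero_add (blockStart f v t)]
  exact h.of_append_right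

lemma exists_blockStart_mem_Icc (hf : ∀ a, f a ≠ []) {K : ℕ} (hK : ∀ a, (f a).length ≤ K)
    (v : ℕ → A) (p : ℕ) : ∃ t, blockStart f v t ∈ Set.Icc p (p + K) := by
  induction p with
  | zero => exact ⟨0, by simp [blockStart, pref]⟩
  | succ p ih =>
    obtain ⟨t, hp, hpK⟩ := ih
    rcases hp.lt_or_eq with hlt | heq
    · exact ⟨t, hlt, by omega⟩
    · refine ⟨t + 1, ?_, ?_⟩ <;> rw [blockStart_succ]
      · have := List.length_pos_iff.2 (hf (v t)); omega
      · have := hK (v t); omega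

/-- The blocks `f (v t)`, of length at most `K`, tile `subApplyG f v`, so one of them starts in
every window of length `K`. -/
lemma exists_occursAt_near (hf : ∀ a, f a ≠ []) {K : ℕ} (hK : ∀ a, (f a).length ≤ K)
    {u : List A} (hu : ∀ a, u <:+: f a) (v : ℕ → A) (p : ℕ) :
    ∃ q ≤ K + K, OccursAt (subApplyG f v) u (p + q) := by
  obtain ⟨t, hp, hpK⟩ := exists_blockStart_mem_Icc hf hK v p
  obtain ⟨r, hr, hocc⟩ := (occursAt_block hf v t).of_infix (hu (v t))
  refine ⟨blockStart f v t - p + r, by have := hK (v t); omega, ?_⟩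
  rwa [← add_assoc, Nat.add_sub_cancel' hp]

def compSub (f g : A → List A) (a : A) : List A := (g a).flatMap f

lemma flatMap_compSub (l : List A) : l.flatMap (compSub f g) = (l.flatMap g).flatMap f :=
  List.flatMap_assoc.symm

lemma compSub_ne_nil (hf : ∀ a, f a ≠ []) (hg : ∀ a, g a ≠ []) (a : A) : compSub f g a ≠ [] :=
  List.length_pos_iff.1 <|
    (List.length_pos_iff.2 (hg a)).trans_le (length_le_length_flatMap hf (g a))

lemma compSub_assoc (f g h : A → List A) :
    compSub (compSub f g) h = compSub f (compSub g h) :=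
  funext fun a => flatMap_compSub (h a)

lemma compSub_singleton (f : A → List A) : compSub f (fun a => [a]) = f :=
  funext fun a => List.flatMap_singleton f a

lemma subApplyG_compSub (hf : ∀ a, f a ≠ []) (hg : ∀ a, g a ≠ []) (u : ℕ → A) :
    subApplyG (compSub f g) u = subApplyG f (subApplyG g u) := by
  funext i
  set l := (pref u (i + 1)).flatMap g
  have hl : l = pref (subApplyG g u) l.length := (occursAt_subApplyG hg u (i + 1)).eq_pref
  have hi : i < (l.flatMap f).length :=
    calc i < i + 1 := i.lt_succ_self
      _ ≤ l.length := by
        simpa only [length_pref] using length_le_length_flatMap hg (pref u (i + 1))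
      _ ≤ _ := length_le_length_flatMap hf l
  have h₁ := occursAt_subApplyG (compSub_ne_nil hf hg) u (i + 1) i (by rwa [flatMap_compSub])
  have h₂ := occursAt_subApplyG hf (subApplyG g u) l.length i (by rwa [← hl])
  rw [zero_add] at h₁ h₂
  rw [h₁, h₂]
  exact List.getElem_of_eq (by rw [flatMap_compSub, ← hl]) _

end Substitution

section Products

variable {s : ℕ → A → List A}

/-- The composition `σ_m ∘ ⋯ ∘ σ_{m+t-1}` of the substitutions `σ_k = s k`. -/
def prodFrom (s : ℕ → A → List A) (m : ℕ) : ℕ → A → List A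
  | 0 => fun a => [a]
  | t + 1 => compSub (prodFrom s m t) (s (m + t))

lemma prodFrom_ne_nil (hne : ∀ n a, s n a ≠ []) (m t : ℕ) (a : A) : prodFrom s m t a ≠ [] := by
  induction t generalizing a with
  | zero => exact List.cons_ne_nil a []
  | succ t ih => exact compSub_ne_nil ih (hne (m + t)) a

lemma prodFrom_add (s : ℕ → A → List A) (m t t' : ℕ) :
    prodFrom s m (t + t') = compSub (prodFrom s m t) (prodFrom s (m + t) t') := by
  induction t' with
  | zero => exact (compSub_singleton _).symm
  | succ t' ih => rw [← add_assoc, prodFrom, ih, compSub_assoc, prodFrom, add_assoc]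

lemma eq_subApplyG_prodFrom (hne : ∀ n a, s n a ≠ []) {ws : ℕ → ℕ → A}
    (hrec : ∀ n, ws n = subApplyG (s n) (ws (n + 1))) (m : ℕ) :
    ws 0 = subApplyG (prodFrom s 0 m) (ws m) := by
  induction m with
  | zero => exact (subApplyG_singleton _).symm
  | succ m ih =>
    rw [ih, hrec m, ← subApplyG_compSub (prodFrom_ne_nil hne 0 m) (hne m), prodFrom, zero_add]

lemma two_le_length_of_forall_mem [Nontrivial A] {l : List A} (h : ∀ a, a ∈ l) :
    2 ≤ l.length := by
  obtain ⟨b, c, hbc⟩ := exists_pair_ne A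
  match l, h with
  | [], h => exact absurd (h b) List.not_mem_nil
  | [_], h =>
    exact absurd ((List.mem_singleton.1 (h b)).trans (List.mem_singleton.1 (h c)).symm) hbc
  | _ :: _ :: _, _ => simp

/-- Each step `m ↦ m + t` at least doubles the block lengths, as every block of
`prodFrom s m t` contains two distinct letters. -/
lemma exists_forall_le_length_prodFrom [Nontrivial A]
    (hmem : ∀ m, ∃ t, ∀ i j, i ∈ prodFrom s m t j) (L : ℕ) :
    ∃ m, ∀ a, L ≤ (prodFrom s 0 m a).length := by
  suffices ∀ k, ∃ m, ∀ a, 2 ^ k ≤ (prodFrom s 0 m a).length from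
    (this L).imp fun m hm a => Nat.lt_two_pow_self.le.trans (hm a)
  intro k
  induction k with
  | zero => exact ⟨0, fun a => by simp [prodFrom]⟩
  | succ k ih =>
    obtain ⟨m, hm⟩ := ih
    obtain ⟨t, ht⟩ := hmem m
    refine ⟨m + t, fun a => ?_⟩
    rw [prodFrom_add, zero_add]
    calc 2 ^ (k + 1) = 2 * 2 ^ k := by ring
      _ ≤ (prodFrom s m t a).length * 2 ^ k :=
        Nat.mul_le_mul_right _ (two_le_length_of_forall_mem (ht · a))
      _ ≤ _ := mul_le_length_flatMap fun b _ => hm b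

end Products

section Incidence

variable [DecidableEq A]

lemma incMatG_singleton : incMatG (fun a : A => [a]) = 1 := by
  ext i j
  simp [incMatG, Matrix.one_apply, List.count_singleton, eq_comm (a := j)]

variable [Fintype A]

lemma incMatG_compSub (f g : A → List A) : incMatG (compSub f g) = incMatG f * incMatG g := by
  ext i j
  simp only [incMatG, compSub, Matrix.mul_apply, Matrix.of_apply, List.count_flatMap,
    Finset.sum_list_map_count]
  rw [Finset.sum_subset (Finset.subset_univ _) fun a _ ha => by
    simp [List.count_eq_zero_of_not_mem (mt List.mem_toFinset.2 ha)]]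
  exact Finset.sum_congr rfl fun _ _ => (smul_eq_mul _ _).trans (mul_comm _ _)

lemma incMatG_prodFrom (s : ℕ → A → List A) (m t : ℕ) :
    incMatG (prodFrom s m t) = ((List.range t).map fun k => incMatG (s (m + k))).prod := by
  induction t with
  | zero => exact incMatG_singleton
  | succ t ih => simp [prodFrom, incMatG_compSub, ih, List.range_succ]

end Incidence

lemma _root_.PrimitiveSeq.exists_forall_mem_prodFrom [Fintype A] [DecidableEq A]
    {s : ℕ → A → List A} (hprim : PrimitiveSeq s) (m : ℕ) :
    ∃ t, ∀ i j, i ∈ prodFrom s m t j := by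
  obtain ⟨n, -, hpos⟩ := hprim m
  refine ⟨n - m, fun i j => List.count_pos_iff.1 ?_⟩
  have := hpos i j
  rwa [← incMatG_prodFrom] at this

def UniformlyRecurrent (w : ℕ → A) : Prop :=
  ∀ L, ∃ K, ∀ p, ∃ q ≤ K, ∀ i < L, w (p + q + i) = w i

lemma uniformlyRecurrent_of_limit [Finite A] {s : ℕ → A → List A} (hne : ∀ n a, s n a ≠ [])
    (hmem : ∀ m, ∃ t, ∀ i j, i ∈ prodFrom s m t j) {ws : ℕ → ℕ → A}
    (hrec : ∀ n, ws n = subApplyG (s n) (ws (n + 1))) : UniformlyRecurrent (ws 0) := by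
  cases subsingleton_or_nontrivial A
  · exact fun L => ⟨0, fun p => ⟨0, le_rfl, fun i _ => Subsingleton.elim _ _⟩⟩
  intro L
  obtain ⟨m, hm⟩ := exists_forall_le_length_prodFrom hmem L
  obtain ⟨t, ht⟩ := hmem m
  set u := prodFrom s 0 m (ws m 0)
  have hu₀ : OccursAt (ws 0) u 0 := by
    simpa [← eq_subApplyG_prodFrom hne hrec, blockStart, pref] using
      occursAt_block (prodFrom_ne_nil hne 0 m) (ws m) 0
  have hu : ∀ a, u <:+: prodFrom s 0 (m + t) a := fun a => by
    rw [prodFrom_add, zero_add]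
    exact List.infix_flatMap_of_mem (ht _ a) _
  obtain ⟨K, hK⟩ := Finite.exists_le fun a => (prodFrom s 0 (m + t) a).length
  refine ⟨K + K, fun p => ?_⟩
  obtain ⟨q, hqK, hq⟩ :=
    exists_occursAt_near (prodFrom_ne_nil hne 0 (m + t)) hK hu (ws (m + t)) p
  rw [← eq_subApplyG_prodFrom hne hrec] at hq
  refine ⟨q, hqK, fun i hi => ?_⟩
  have hi' : i < u.length := hi.trans_le (hm _)
  simpa using (hq i hi').trans (hu₀ i hi').symm

section Topology

variable [TopologicalSpace A]

lemma orbitOf_subset_closure {x z : ℕ → A} (hx : x ∈ closure (orbitOf z)) :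
    orbitOf x ⊆ closure (orbitOf z) := by
  rintro _ ⟨k, rfl⟩
  refine map_mem_closure (f := fun v n => v (n + k)) (by fun_prop) hx ?_
  rintro _ ⟨j, rfl⟩
  exact ⟨k + j, by simp [add_assoc]⟩

variable [DiscreteTopology A]

open PiNat

lemma mem_closure_iff_forall_cylinder {S : Set (ℕ → A)} {x : ℕ → A} :
    x ∈ closure S ↔ ∀ n, (cylinder x n ∩ S).Nonempty := by
  rw [(isTopologicalBasis_cylinders fun _ => A).mem_closure_iff]
  refine ⟨fun h n => h _ ⟨x, n, rfl⟩ (self_mem_cylinder x n), ?_⟩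
  rintro h _ ⟨y, n, rfl⟩ hx
  rw [← mem_cylinder_iff_eq.1 hx]
  exact h n

variable {w x : ℕ → A}

lemma UniformlyRecurrent.mem_closure_orbitOf (hw : UniformlyRecurrent w)
    (hx : x ∈ closure (orbitOf w)) : w ∈ closure (orbitOf x) := by
  rw [mem_closure_iff_forall_cylinder] at hx ⊢
  intro L
  obtain ⟨K, hK⟩ := hw L
  obtain ⟨_, hxw, j, rfl⟩ := hx (K + L)
  obtain ⟨q, hqK, hq⟩ := hK j
  refine ⟨fun n => x (n + q), fun i hi => ?_, q, rfl⟩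
  change x (i + q) = w i
  rw [← hq i hi, ← hxw (i + q) (by omega)]
  exact congrArg w (by omega)

lemma UniformlyRecurrent.closure_orbitOf_eq (hw : UniformlyRecurrent w)
    (hx : x ∈ closure (orbitOf w)) : closure (orbitOf x) = closure (orbitOf w) :=
  (closure_minimal (orbitOf_subset_closure hx) isClosed_closure).antisymm
    (closure_minimal (orbitOf_subset_closure (hw.mem_closure_orbitOf hx)) isClosed_closure)

end Topology

end SAdic

open SAdic in
/-- If `σ` is primitive and `w` a limit sequence of `σ`, the S-adic system
`(X_w, Σ)` is minimal: every orbit is dense. -/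
theorem stmt13 {A : Type*} [Fintype A] [DecidableEq A]
    [TopologicalSpace A] [DiscreteTopology A]
    (s : ℕ → A → List A) (hne : ∀ n a, s n a ≠ []) (hprim : PrimitiveSeq s)
    (w : ℕ → A) (hw : IsLimitSeq s w) :
    ∀ x ∈ closure (orbitOf w), closure (orbitOf x) = closure (orbitOf w) := by
  intro x hx
  obtain ⟨ws, rfl, hrec⟩ := hw
  have hrecur := uniformlyRecurrent_of_limit hne hprim.exists_forall_mem_prodFrom hrec
  exact hrecur.closure_orbitOf_eq hx
end

section
/- Let σ be an algebraically irreducible sequence of substitutions with finitely balanced language L_σ admitting a generalized right eigenvector u ∈ ℝ^d_{≥0}\{0}. Then u has rationally independent coordinates: there is no x ∈ ℤ^d\{0} with ⟨x, u⟩ = 0. -/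
/-- `σ_{[0,n)}(a)`: the word obtained by applying `σ_0 ∘ ⋯ ∘ σ_{n-1}` to the letter `a`. -/
def sadicWord {d : ℕ} (s : ℕ → Fin d → List (Fin d)) : ℕ → Fin d → List (Fin d)
  | 0, a => [a]
  | n + 1, a => (s n a).flatMap (sadicWord s n)

/-- The language of the directive sequence `σ`. -/
def InLang {d : ℕ} (s : ℕ → Fin d → List (Fin d)) (v : List (Fin d)) : Prop :=
  ∃ n a, v <:+: sadicWord s n a

/-- The incidence matrix (over `ℚ`) of the `n`-th substitution. -/
def incQ {d : ℕ} (s : ℕ → Fin d → List (Fin d)) (n : ℕ) : Matrix (Fin d) (Fin d) ℚ :=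
  Matrix.of fun i j => ((s n j).count i : ℚ)

/-- The product `M_m ⋯ M_{ℓ-1}` of incidence matrices. -/
def incQProd {d : ℕ} (s : ℕ → Fin d → List (Fin d)) (m ℓ : ℕ) : Matrix (Fin d) (Fin d) ℚ :=
  ((List.range (ℓ - m)).map fun k => incQ s (m + k)).prod

/-!
Suppose `⟨x, u⟩ = 0` for some `x ∈ ℤ^d \ {0}`. By balance, the weight `⟨x, |v|⟩` of a factor `v`
depends on `|v|` only up to a bounded error, so it is a quasimorphism of the length and equals
`g |v| + O(1)`. The normalised Parikh vectors of long columns `σ_{[0,n)}(a)` accumulate in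
`⋂ₙ M_{[0,n)} ℝ^d_{≥0} = ℝ₊ u`, on which `⟨x, ·⟩` vanishes, whence `g = 0`. So the integer row
vectors `x M_{[0,n)}` are bounded and one of them, `y ≠ 0`, recurs at levels `m < ℓ` with `ℓ`
arbitrarily large. Then `y M_{[m,ℓ)} = y`, so `1` is a root of the irreducible polynomial
`χ(M_{[m,ℓ)})` of degree `d`, forcing `d = 1`, where the claim is trivial.
-/

open Filter Topology Matrix Polynomial

section Parikh

variable {α : Type*} [DecidableEq α]

def parikh (v : List α) : α → ℝ := fun i => v.count i

@[simp]
lemma parikh_append (v w : List α) : parikh (v ++ w) = parikh v + parikh w := by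
  ext i; simp [parikh]

lemma parikh_nonneg (v : List α) (i : α) : 0 ≤ parikh v i := Nat.cast_nonneg _

lemma parikh_le_length (v : List α) (i : α) : parikh v i ≤ v.length :=
  Nat.cast_le.2 List.count_le_length

lemma abs_dotProduct_le {ι : Type*} [Fintype ι] (x z : ι → ℝ) {K : ℝ} (h : ∀ i, |z i| ≤ K) :
    |x ⬝ᵥ z| ≤ (∑ i, |x i|) * K :=
  calc |x ⬝ᵥ z| ≤ ∑ i, |x i * z i| := Finset.abs_sum_le_sum_abs _ _
    _ ≤ ∑ i, |x i| * K := Finset.sum_le_sum fun i _ => by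
        rw [abs_mul]; exact mul_le_mul_of_nonneg_left (h i) (abs_nonneg _)
    _ = (∑ i, |x i|) * K := (Finset.sum_mul _ _ _).symm

lemma abs_dotProduct_parikh_sub_le [Fintype α] (x : α → ℝ) {v v' : List α} {C : ℕ}
    (h : ∀ i, |(v.count i : ℤ) - v'.count i| ≤ C) :
    |x ⬝ᵥ parikh v - x ⬝ᵥ parikh v'| ≤ (∑ i, |x i|) * C := by
  rw [← dotProduct_sub]
  refine abs_dotProduct_le x _ fun i => ?_
  simpa [parikh] using (Int.cast_le (R := ℝ)).2 (h i)

lemma List.count_flatMap_eq_sum {β : Type*} [Fintype β] [DecidableEq β] (l : List β)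
    (f : β → List α) (i : α) : (l.flatMap f).count i = ∑ j, l.count j * (f j).count i := by
  rw [List.count_flatMap, Finset.sum_list_map_count]
  refine Finset.sum_subset (Finset.subset_univ _) fun j _ hj => ?_
  simp [List.count_eq_zero_of_not_mem (mt List.mem_toFinset.2 hj)]

end Parikh

lemma exists_abs_sub_mul_le_of_abs_add_sub_le {a : ℕ → ℝ} {D : ℝ}
    (h : ∀ m n, |a (m + n) - a m - a n| ≤ D) : ∃ g, ∀ n, |a n - n * g| ≤ D := by
  have hmul : ∀ k n, |a ((k + 1) * n) - (k + 1) * a n| ≤ k * D := by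
    intro k n
    induction k with
    | zero => simp
    | succ k ih =>
      calc |a ((k + 1 + 1) * n) - ((k + 1 : ℕ) + 1) * a n|
          = |(a ((k + 1) * n + n) - a ((k + 1) * n) - a n) + (a ((k + 1) * n) - (k + 1) * a n)| := by
            rw [add_mul _ 1 n, one_mul]; push_cast; ring_nf
        _ ≤ D + k * D := (abs_add_le _ _).trans (add_le_add (h _ _) ih)
        _ = (k + 1 : ℕ) * D := by push_cast; ring
  have hD : 0 ≤ D := (abs_nonneg _).trans (h 0 0)
  -- From `a (m n) ≈ m a n ≈ n a m`: every lower estimate `(a n - D) / n` of the slope lies below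
  -- every upper estimate `(a m + D) / m`; `g` is squeezed between them.
  have hcmp : ∀ m n : ℕ, (a (n + 1) - D) / (n + 1) ≤ (a (m + 1) + D) / (m + 1) := by
    intro m n
    have h1 := abs_le.1 (hmul m (n + 1))
    have h2 := abs_le.1 (hmul n (m + 1))
    rw [mul_comm (n + 1) (m + 1)] at h2
    rw [div_le_div_iff₀ (by positivity) (by positivity)]
    nlinarith
  have hbdd : BddBelow (Set.range fun m : ℕ => (a (m + 1) + D) / (m + 1)) :=
    ⟨(a 1 - D) / 1, Set.forall_mem_range.2 fun m => by simpa using hcmp m 0⟩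
  refine ⟨⨅ m : ℕ, (a (m + 1) + D) / (m + 1), fun n => ?_⟩
  cases n with
  | zero => simpa using h 0 0
  | succ n =>
    have hlo := le_ciInf fun m => hcmp m n
    have hhi := ciInf_le hbdd n
    rw [div_le_iff₀ (by positivity)] at hlo
    rw [le_div_iff₀ (by positivity)] at hhi
    rw [abs_le]; push_cast
    constructor <;> nlinarith

lemma exists_abs_sub_length_mul_le {α : Type*} {L : Set (List α)}
    (hL : ∀ ⦃v w⦄, v <:+: w → w ∈ L → v ∈ L) (hlen : ∀ N, ∃ v ∈ L, v.length = N)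
    {w : List α → ℝ} (hw : ∀ v v', w (v ++ v') = w v + w v') {B : ℝ}
    (hB : ∀ v ∈ L, ∀ v' ∈ L, v.length = v'.length → |w v - w v'| ≤ B) :
    ∃ g, ∀ v ∈ L, |w v - v.length * g| ≤ 3 * B := by
  choose r hrL hrlen using hlen
  have hadd : ∀ m n, |w (r (m + n)) - w (r m) - w (r n)| ≤ 2 * B := by
    intro m n
    set v := r (m + n)
    have hv : v.length = m + n := hrlen _
    have h1 := hB _ (hL (List.take_prefix m v).isInfix (hrL _)) _ (hrL m) (by simp [hv, hrlen])
    have h2 := hB _ (hL (List.drop_suffix m v).isInfix (hrL _)) _ (hrL n) (by simp [hv, hrlen])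
    rw [← List.take_append_drop m v, hw]
    calc |w (v.take m) + w (v.drop m) - w (r m) - w (r n)|
        = |(w (v.take m) - w (r m)) + (w (v.drop m) - w (r n))| := by ring_nf
      _ ≤ 2 * B := (abs_add_le _ _).trans (by linarith)
  obtain ⟨g, hg⟩ := exists_abs_sub_mul_le_of_abs_add_sub_le (a := fun n => w (r n)) hadd
  refine ⟨g, fun v hv => ?_⟩
  calc |w v - v.length * g| ≤ |w v - w (r v.length)| + |w (r v.length) - v.length * g| :=
        abs_sub_le _ _ _
    _ ≤ B + 2 * B := add_le_add (hB v hv _ (hrL _) (hrlen _).symm) (hg _)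
    _ = 3 * B := by ring

lemma Matrix.isClosed_image_mulVec {ι : Type*} [Fintype ι] [DecidableEq ι] {A : Matrix ι ι ℝ}
    (hA : IsUnit A.det) {S : Set (ι → ℝ)} (hS : IsClosed S) : IsClosed ((A *ᵥ ·) '' S) := by
  rw [Set.image_eq_preimage_of_inverse (g := (A⁻¹ *ᵥ ·))
    (fun x => by simp [mulVec_mulVec, nonsing_inv_mul _ hA])
    (fun x => by simp [mulVec_mulVec, mul_nonsing_inv _ hA])]
  exact hS.preimage (continuous_const.matrix_mulVec continuous_id)

lemma Matrix.card_eq_one_of_irreducible_charpoly {ι K : Type*} [Fintype ι] [DecidableEq ι]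
    [Field K] {A : Matrix ι ι K} (hA : Irreducible A.charpoly) {y : ι → K} (hy : y ≠ 0)
    (hfix : y ᵥ* A = y) : Fintype.card ι = 1 := by
  have hdet : (scalar ι (1 : K) - A).det = 0 :=
    exists_vecMul_eq_zero_iff.1 ⟨y, hy, by simp [vecMul_sub, hfix]⟩
  have hroot : A.charpoly.IsRoot 1 := by rw [IsRoot, eval_charpoly, hdet]
  have := degree_eq_one_of_irreducible_of_root hA hroot
  rw [charpoly_degree_eq_dim] at this
  exact_mod_cast this

lemma exists_frequently_eq_of_finite_range {β : Type*} {T : ℕ → β} (h : (Set.range T).Finite) :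
    ∃ m, ∃ᶠ ℓ in atTop, T ℓ = T m := by
  by_contra! hT
  obtain ⟨ℓ, hℓ⟩ := ((Filter.eventually_all_finite h (p := fun y ℓ => T ℓ ≠ y)).2
    (Set.forall_mem_range.2 hT)).exists
  exact hℓ _ ⟨ℓ, rfl⟩ rfl

section Sadic

variable {d : ℕ} (s : ℕ → Fin d → List (Fin d))

variable {s} in
lemma InLang.of_infix {v w : List (Fin d)} (h : v <:+: w) (hw : InLang s w) : InLang s v :=
  let ⟨n, a, hn⟩ := hw; ⟨n, a, h.trans hn⟩

lemma inLang_sadicWord (n : ℕ) (a : Fin d) : InLang s (sadicWord s n a) :=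
  ⟨n, a, List.infix_refl _⟩

variable {s} in
lemma exists_inLang_length_eq (hunb : ∀ N, ∃ n a, N < (sadicWord s n a).length) (N : ℕ) :
    ∃ v, InLang s v ∧ v.length = N := by
  obtain ⟨n, a, hN⟩ := hunb N
  exact ⟨_, (inLang_sadicWord s n a).of_infix (List.take_prefix N _).isInfix,
    List.length_take_of_le hN.le⟩

variable {s} in
lemma exists_le_level_lt_length (hunb : ∀ N, ∃ n a, N < (sadicWord s n a).length) (N : ℕ) :
    ∃ n, N ≤ n ∧ ∃ a, N < (sadicWord s n a).length := by
  set M := (Finset.range N ×ˢ Finset.univ).sup fun p : ℕ × Fin d => (sadicWord s p.1 p.2).length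
  obtain ⟨n, a, hn⟩ := hunb (max N M)
  refine ⟨n, ?_, a, (le_max_left _ _).trans_lt hn⟩
  by_contra! hnN
  have : (sadicWord s n a).length ≤ M :=
    Finset.le_sup (f := fun p : ℕ × Fin d => (sadicWord s p.1 p.2).length) (b := (n, a))
      (Finset.mem_product.2 ⟨Finset.mem_range.2 hnN, Finset.mem_univ a⟩)
  omega

lemma incQProd_mul {k m ℓ : ℕ} (hkm : k ≤ m) (hmℓ : m ≤ ℓ) :
    incQProd s k m * incQProd s m ℓ = incQProd s k ℓ := by
  unfold incQProd
  rw [show ℓ - k = (m - k) + (ℓ - m) by omega, List.range_add, List.map_append, List.prod_append,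
    List.map_map]
  congr 3
  ext j : 1
  simp only [Function.comp_apply]
  congr 1
  omega

lemma incQProd_self_succ (n : ℕ) : incQProd s n (n + 1) = incQ s n := by
  simp [incQProd]

lemma incQProd_zero_apply (n : ℕ) (i a : Fin d) :
    incQProd s 0 n i a = (sadicWord s n a).count i := by
  induction n generalizing a with
  | zero =>
    by_cases h : i = a
    · simp [incQProd, sadicWord, h]
    · simp [incQProd, sadicWord, Matrix.one_apply_ne h, Ne.symm h]
  | succ n ih =>
    rw [← incQProd_mul s n.zero_le n.le_succ, incQProd_self_succ, Matrix.mul_apply, sadicWord,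
      List.count_flatMap_eq_sum]
    push_cast
    simp only [ih, incQ, Matrix.of_apply, mul_comm]

lemma incQProd_eq_shift (m ℓ : ℕ) : incQProd s m ℓ = incQProd (fun k => s (m + k)) 0 (ℓ - m) := by
  simp [incQProd, incQ]

lemma incQProd_apply_nonneg (m ℓ : ℕ) (i j : Fin d) : 0 ≤ incQProd s m ℓ i j := by
  rw [incQProd_eq_shift, incQProd_zero_apply]
  exact Nat.cast_nonneg _

variable {s} in
lemma det_incQProd_ne_zero (hinv : ∀ n, (incQ s n).det ≠ 0) (m ℓ : ℕ) :
    (incQProd s m ℓ).det ≠ 0 := by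
  rw [incQProd, ← coe_detMonoidHom, map_list_prod, List.map_map]
  exact List.prod_ne_zero (by simpa using fun k _ => hinv (m + k))

def sadicCone (n : ℕ) : Set (Fin d → ℝ) :=
  (fun x => ((incQProd s 0 n).map (fun q : ℚ => (q : ℝ))).mulVec x) '' {x | ∀ i, 0 ≤ x i}

variable {s} in
lemma isClosed_sadicCone (hinv : ∀ n, (incQ s n).det ≠ 0) (n : ℕ) : IsClosed (sadicCone s n) := by
  refine Matrix.isClosed_image_mulVec ?_ isClosed_Ici
  rw [isUnit_iff_ne_zero]
  intro h0
  apply det_incQProd_ne_zero hinv 0 n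
  have h := ((Rat.castHom ℝ).map_det _).trans h0
  rwa [Rat.coe_castHom, Rat.cast_eq_zero] at h

lemma parikh_sadicWord (n : ℕ) (a : Fin d) :
    parikh (sadicWord s n a) = ((incQProd s 0 n).map (fun q : ℚ => (q : ℝ))).col a := by
  ext i
  simp [parikh, incQProd_zero_apply]

lemma smul_parikh_mem_sadicCone {m n : ℕ} (h : m ≤ n) (a : Fin d) {c : ℝ} (hc : 0 ≤ c) :
    c • parikh (sadicWord s n a) ∈ sadicCone s m := by
  refine ⟨c • ((incQProd s m n).map (fun q : ℚ => (q : ℝ))).col a,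
    fun j => mul_nonneg hc (by simpa using incQProd_apply_nonneg s m n j a), ?_⟩
  dsimp only
  rw [mulVec_smul, ← mulVec_single_one, mulVec_mulVec, parikh_sadicWord,
    ← mulVec_single_one]
  congr 2
  rw [← incQProd_mul s m.zero_le h]
  exact (Matrix.map_mul (f := Rat.castHom ℝ)).symm

variable {s} in
lemma exists_mem_iInter_sadicCone_dotProduct_eq (hinv : ∀ n, (incQ s n).det ≠ 0)
    (hunb : ∀ N, ∃ n a, N < (sadicWord s n a).length) (x : Fin d → ℝ) {g K : ℝ}
    (hK : ∀ n a, |x ⬝ᵥ parikh (sadicWord s n a) - (sadicWord s n a).length * g| ≤ K) :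
    ∃ f ∈ ⋂ n, sadicCone s n, x ⬝ᵥ f = g := by
  choose lv hlv av hlen using exists_le_level_lt_length hunb
  set w : ℕ → List (Fin d) := fun N => sadicWord s (lv N) (av N)
  have hlen' : ∀ N : ℕ, (N : ℝ) < (w N).length := fun N => by exact_mod_cast hlen N
  have hpos : ∀ N, (0 : ℝ) < (w N).length := fun N => (Nat.cast_nonneg N).trans_lt (hlen' N)
  set z : ℕ → Fin d → ℝ := fun N => ((w N).length : ℝ)⁻¹ • parikh (w N)
  have hz : ∀ N, z N ∈ Set.Icc 0 1 := fun N =>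
    ⟨fun i => mul_nonneg (inv_nonneg.2 (hpos N).le) (parikh_nonneg _ i),
      fun i => inv_mul_le_one_of_le₀ (parikh_le_length _ i) (hpos N).le⟩
  have hzg : Tendsto (fun N => x ⬝ᵥ z N) atTop (𝓝 g) := by
    have hbound : ∀ N, ‖x ⬝ᵥ z N - g‖ ≤ K / (w N).length := fun N => by
      have : x ⬝ᵥ z N - g = (x ⬝ᵥ parikh (w N) - (w N).length * g) / (w N).length := by
        simp only [z, dotProduct_smul, smul_eq_mul]
        field_simp [(hpos N).ne']
      rw [Real.norm_eq_abs, this, abs_div, abs_of_pos (hpos N)]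
      exact div_le_div_of_nonneg_right (hK _ _) (hpos N).le
    have hlen_top : Tendsto (fun N => ((w N).length : ℝ)) atTop atTop :=
      tendsto_atTop_mono (fun N => (hlen' N).le) tendsto_natCast_atTop_atTop
    exact tendsto_sub_nhds_zero_iff.1
      (squeeze_zero_norm hbound (tendsto_const_nhds.div_atTop hlen_top))
  obtain ⟨f, -, φ, hφ, hlim⟩ := isCompact_Icc.tendsto_subseq hz
  refine ⟨f, Set.mem_iInter.2 fun m => ?_, ?_⟩
  · refine (isClosed_sadicCone hinv m).mem_of_tendsto hlim
      (eventually_atTop.2 ⟨m, fun k hk => ?_⟩)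
    exact smul_parikh_mem_sadicCone s ((hk.trans (hφ.id_le k)).trans (hlv _)) _
      (inv_nonneg.2 (hpos _).le)
  · exact tendsto_nhds_unique
      (((continuous_const.dotProduct continuous_id).tendsto f).comp hlim)
      (hzg.comp hφ.tendsto_atTop)

variable {s} in
lemma exists_abs_dotProduct_parikh_sadicWord_le (hinv : ∀ n, (incQ s n).det ≠ 0)
    (hbal : ∃ C : ℕ, ∀ v v' : List (Fin d), InLang s v → InLang s v' →
      v.length = v'.length → ∀ i, |(v.count i : ℤ) - (v'.count i : ℤ)| ≤ (C : ℤ))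
    {u : Fin d → ℝ} (heig : ⋂ n, sadicCone s n = {x | ∃ t : ℝ, 0 ≤ t ∧ x = t • u})
    {x : Fin d → ℝ} (hxu : x ⬝ᵥ u = 0) :
    ∃ E, ∀ n a, |x ⬝ᵥ parikh (sadicWord s n a)| ≤ E := by
  by_cases hunb : ∀ N, ∃ n a, N < (sadicWord s n a).length
  · obtain ⟨C, hC⟩ := hbal
    obtain ⟨g, hg⟩ := exists_abs_sub_length_mul_le (L := {v | InLang s v})
      (fun _ _ h hw => hw.of_infix h) (fun N => exists_inLang_length_eq hunb N)
      (w := (x ⬝ᵥ parikh ·)) (fun v v' => by simp [dotProduct_add])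
      (fun v hv v' hv' hl => abs_dotProduct_parikh_sub_le x (hC v v' hv hv' hl))
    obtain ⟨f, hf, hfg⟩ := exists_mem_iInter_sadicCone_dotProduct_eq hinv hunb x
      fun n a => hg _ (inLang_sadicWord s n a)
    obtain ⟨t, -, rfl⟩ : f ∈ {x | ∃ t : ℝ, 0 ≤ t ∧ x = t • u} := heig ▸ hf
    have hg0 : g = 0 := by rw [← hfg, dotProduct_smul, hxu, smul_zero]
    exact ⟨_, fun n a => by simpa [hg0] using hg _ (inLang_sadicWord s n a)⟩
  · push Not at hunb
    obtain ⟨N, hN⟩ := hunb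
    refine ⟨(∑ i, |x i|) * N, fun n a => abs_dotProduct_le x _ fun i => ?_⟩
    rw [abs_of_nonneg (parikh_nonneg _ _)]
    exact (parikh_le_length _ _).trans (by exact_mod_cast hN n a)

variable {s} in
lemma eq_one_of_abs_dotProduct_parikh_sadicWord_le (hinv : ∀ n, (incQ s n).det ≠ 0)
    (hirr : ∀ m : ℕ, ∃ n > m, ∀ ℓ ≥ n, Irreducible (incQProd s m ℓ).charpoly)
    {x : Fin d → ℤ} (hx : x ≠ 0) {E : ℝ}
    (hE : ∀ n a, |(Int.cast ∘ x) ⬝ᵥ parikh (sadicWord s n a)| ≤ E) : d = 1 := by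
  set T : ℕ → Fin d → ℤ := fun n a => ∑ i, x i * (sadicWord s n a).count i
  have hTx : ∀ n, (Int.cast ∘ x : Fin d → ℚ) ᵥ* incQProd s 0 n = Int.cast ∘ T n := fun n => by
    ext a
    simp [T, vecMul, dotProduct, incQProd_zero_apply]
  have hTE : ∀ n a, |T n a| ≤ ⌈E⌉ := fun n a => by
    have : ((|T n a| : ℤ) : ℝ) ≤ E := by simpa [T, dotProduct, parikh] using hE n a
    exact Int.cast_le.1 (this.trans (Int.le_ceil E))
  have hfin : (Set.range T).Finite := (Set.finite_Icc (-fun _ => ⌈E⌉) fun _ => ⌈E⌉).subset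
    (Set.range_subset_iff.2 fun n => ⟨fun a => neg_le_of_abs_le (hTE n a),
      fun a => le_of_abs_le (hTE n a)⟩)
  obtain ⟨m, hm⟩ := exists_frequently_eq_of_finite_range hfin
  obtain ⟨N, hNm, hN⟩ := hirr m
  obtain ⟨ℓ, hℓN, hℓ⟩ := frequently_atTop.1 hm N
  set y := (Int.cast ∘ x : Fin d → ℚ) ᵥ* incQProd s 0 m
  have hy : y ≠ 0 := fun hy0 => hx <| by
    have hunit : IsUnit (incQProd s 0 m) :=
      (isUnit_iff_isUnit_det _).2 (isUnit_iff_ne_zero.2 (det_incQProd_ne_zero hinv 0 m))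
    have := vecMul_injective_of_isUnit hunit (hy0.trans (zero_vecMul _).symm)
    ext i
    simpa using congrFun this i
  have hfix : y ᵥ* incQProd s m ℓ = y := by
    rw [vecMul_vecMul, incQProd_mul s m.zero_le (hNm.le.trans hℓN), hTx, hℓ, ← hTx]
  simpa using card_eq_one_of_irreducible_charpoly (hN ℓ hℓN) hy hfix

end Sadic

theorem stmt16_general {d : ℕ} (s : ℕ → Fin d → List (Fin d))
    (hinv : ∀ n, (incQ s n).det ≠ 0)
    -- algebraic irreducibility
    (hirr : ∀ m : ℕ, ∃ n > m, ∀ ℓ ≥ n, Irreducible (incQProd s m ℓ).charpoly)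
    -- finite balance of the language
    (hbal : ∃ C : ℕ, ∀ v v' : List (Fin d), InLang s v → InLang s v' →
      v.length = v'.length → ∀ i, |(v.count i : ℤ) - (v'.count i : ℤ)| ≤ (C : ℤ))
    (u : Fin d → ℝ) (hu0 : u ≠ 0)
    -- `u` is a generalized right eigenvector
    (heig : (⋂ n : ℕ,
        (fun x => ((incQProd s 0 n).map (fun q : ℚ => (q : ℝ))).mulVec x) ''
          {x : Fin d → ℝ | ∀ i, 0 ≤ x i})
      = {x : Fin d → ℝ | ∃ t : ℝ, 0 ≤ t ∧ x = t • u}) :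
    ∀ x : Fin d → ℤ, x ≠ 0 → (∑ i, (x i : ℝ) * u i) ≠ 0 := by
  intro x hx hxu
  obtain ⟨E, hE⟩ := exists_abs_dotProduct_parikh_sadicWord_le hinv hbal heig hxu
  obtain rfl := eq_one_of_abs_dotProduct_parikh_sadicWord_le hinv hirr hx hE
  have hx0 : x 0 ≠ 0 := fun h => hx (funext fun i => Subsingleton.elim i 0 ▸ h)
  have hu : u 0 ≠ 0 := fun h => hu0 (funext fun i => Subsingleton.elim i 0 ▸ h)
  rw [Fin.sum_univ_one] at hxu
  exact mul_ne_zero (Int.cast_ne_zero.2 hx0) hu hxu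

/-- If `σ` is algebraically irreducible with finitely balanced language and admits a
generalized right eigenvector `u ∈ ℝ^d_{≥0} \ {0}`, then the coordinates of `u` are
rationally independent. -/
theorem stmt16 {d : ℕ} (s : ℕ → Fin d → List (Fin d))
    (hne : ∀ n a, s n a ≠ [])
    (hinv : ∀ n, (incQ s n).det ≠ 0)
    -- algebraic irreducibility
    (hirr : ∀ m : ℕ, ∃ n > m, ∀ ℓ ≥ n, Irreducible (incQProd s m ℓ).charpoly)
    -- finite balance of the language
    (hbal : ∃ C : ℕ, ∀ v v' : List (Fin d), InLang s v → InLang s v' →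
      v.length = v'.length → ∀ i, |(v.count i : ℤ) - (v'.count i : ℤ)| ≤ (C : ℤ))
    (u : Fin d → ℝ) (hunn : ∀ i, 0 ≤ u i) (hu0 : u ≠ 0)
    -- `u` is a generalized right eigenvector
    (heig : (⋂ n : ℕ,
        (fun x => ((incQProd s 0 n).map (fun q : ℚ => (q : ℝ))).mulVec x) ''
          {x : Fin d → ℝ | ∀ i, 0 ≤ x i})
      = {x : Fin d → ℝ | ∃ t : ℝ, 0 ≤ t ∧ x = t • u}) :
    ∀ x : Fin d → ℤ, x ≠ 0 → (∑ i, (x i : ℝ) * u i) ≠ 0 :=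
  stmt16_general s hinv hirr hbal u hu0 heig
end

section
/- Let K be a locally finite collection of compact sets covering a Euclidean space E, and suppose m is the covering degree of K (the largest number such that every point of E is in at least m elements of K). Then any point x ∈ E that is contained in exactly m elements of K is not contained in the boundary of any element of K. -/
/-- Let `K` be a locally finite collection of compact sets covering the Euclidean
space `E = ℝ^k`, with covering degree `m` (every point lies in at least `m` elements,
and some point lies in exactly `m`). Then a point contained in exactly `m` elements of
`K` lies in the boundary of no element of `K`. -/
theorem stmt17 {k : ℕ} (K : Set (Set (EuclideanSpace ℝ (Fin k)))) (m : ℕ)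
    (hcomp : ∀ R ∈ K, IsCompact R)
    (hcover : ⋃₀ K = Set.univ)
    (hlf : ∀ C : Set (EuclideanSpace ℝ (Fin k)), IsCompact C →
      {R | R ∈ K ∧ (R ∩ C).Nonempty}.Finite)
    (hdeg : ∀ x : EuclideanSpace ℝ (Fin k), m ≤ {R | R ∈ K ∧ x ∈ R}.ncard)
    (hmax : ∃ y : EuclideanSpace ℝ (Fin k), {R | R ∈ K ∧ y ∈ R}.ncard = m) :
    ∀ x : EuclideanSpace ℝ (Fin k), {R | R ∈ K ∧ x ∈ R}.ncard = m →
      ∀ R ∈ K, x ∉ frontier R := by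
  intro x hx R hR hfr
  have hRc : IsClosed R := (hcomp R hR).isClosed
  have hxR : x ∈ R := hRc.frontier_subset hfr
  have hni : x ∉ interior R := by
    rw [frontier, Set.mem_diff] at hfr
    exact hfr.2
  -- finite family of sets of K meeting the closed unit ball around x
  have hF : {S | S ∈ K ∧ (S ∩ Metric.closedBall x 1).Nonempty}.Finite :=
    hlf _ (isCompact_closedBall x 1)
  set B : Set (Set (EuclideanSpace ℝ (Fin k))) :=
    {S | (S ∈ K ∧ (S ∩ Metric.closedBall x 1).Nonempty) ∧ x ∉ S} with hB
  have hBfin : B.Finite := hF.subset fun S hS => hS.1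
  have hBclosed : IsClosed (⋃ S ∈ B, S) :=
    hBfin.isClosed_biUnion fun S hS => (hcomp S hS.1.1).isClosed
  -- open neighborhood of x avoiding all sets of K near x that don't contain x
  set U : Set (EuclideanSpace ℝ (Fin k)) := (⋃ S ∈ B, S)ᶜ ∩ Metric.ball x 1 with hU
  have hUopen : IsOpen U := hBclosed.isOpen_compl.inter Metric.isOpen_ball
  have hxU : x ∈ U := by
    constructor
    · simp only [Set.mem_compl_iff, Set.mem_iUnion]
      rintro ⟨S, hS, hxS⟩
      exact hS.2 hxS
    · exact Metric.mem_ball_self one_pos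
  -- U is not contained in R since x ∉ interior R
  have : ¬ U ⊆ R := fun h => hni (mem_interior.mpr ⟨U, h, hUopen, hxU⟩)
  obtain ⟨y, hyU, hyR⟩ := Set.not_subset.mp this
  -- the sets containing y are a proper subset of the sets containing x
  have hsub : {S | S ∈ K ∧ y ∈ S} ⊆ {S | S ∈ K ∧ x ∈ S} := by
    rintro S ⟨hSK, hyS⟩
    refine ⟨hSK, ?_⟩
    by_contra hxS
    have hSB : S ∈ B := ⟨⟨hSK, ⟨y, hyS, Metric.ball_subset_closedBall hyU.2⟩⟩, hxS⟩
    exact hyU.1 (Set.mem_biUnion hSB hyS)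
  have hxfin : {S | S ∈ K ∧ x ∈ S}.Finite := by
    refine (hlf {x} isCompact_singleton).subset ?_
    rintro S ⟨hSK, hxS⟩
    exact ⟨hSK, ⟨x, hxS, rfl⟩⟩
  have hssub : {S | S ∈ K ∧ y ∈ S} ⊂ {S | S ∈ K ∧ x ∈ S} := by
    refine ⟨hsub, fun h => ?_⟩
    exact hyR (h ⟨hR, hxR⟩).2
  have hlt : {S | S ∈ K ∧ y ∈ S}.ncard < {S | S ∈ K ∧ x ∈ S}.ncard :=
    Set.ncard_lt_ncard hssub hxfin
  have := hdeg y
  omega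
end
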